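/- arXiv:2307.09399 — 10 statements merged into one kernel-verified Lean document; each statement's English description precedes it below -/
import Mathlib

section
/- For all integers c ≥ 6 and g ≥ 1, the quantity t(c,g) satisfies the recurrence t(c,g) = t(c−1,g) + t(c−2,g−1) + t(c−2,g) + t(c−3,g−1) − t(c−3,g). -/
/-- `tKnot c g` is t(c,g), the number of words in the partially double counted set T(c)
representing 2-bridge knots of crossing number `c` and genus `g`, given by the explicit
formula t(c,g) = (-1)^(c-1) * Σ_{n=0}^{c-2g-1} (-1)^n * binom(n+2g-1, n), the sum being
empty when c - 2g - 1 < 0, and t(c,0) = 0. -/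
def tKnot (c g : ℕ) : ℤ :=
  if g = 0 then 0
  else (-1 : ℤ) ^ (c - 1) *
    ∑ n ∈ Finset.range (c - 2 * g), (-1 : ℤ) ^ n * (Nat.choose (n + 2 * g - 1) n)

/-! With `S j m = ∑_{n<m} (-1)^n C(n+j, n)` one has `t(c,g) = ± S (2g-1) (c-2g)`. Pascal's rule gives
`S (j+1) m + S (j+1) (m-1) = S j m`, which also holds for `m = 0` since `ℕ`-subtraction truncates
and the sums become empty. Applying it twice in `j` turns the recurrence into an identity between
`S (2g-1)` and `S (2g-3)`; for `g = 1` one uses instead that `S 0` is 2-periodic. -/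

open Finset

def altChooseSum (j m : ℕ) : ℤ :=
  ∑ n ∈ range m, (-1 : ℤ) ^ n * ((n + j).choose n : ℕ)

lemma tKnot_add_one_right (c g : ℕ) :
    tKnot c (g + 1) = (-1) ^ (c - 1) * altChooseSum (2 * g + 1) (c - 2 * (g + 1)) := by
  simp only [tKnot, altChooseSum, Nat.add_one_ne_zero, if_false]
  congr 3 with n

lemma altChooseSum_succ_add_altChooseSum (j m : ℕ) :
    altChooseSum (j + 1) (m + 1) + altChooseSum (j + 1) m = altChooseSum j (m + 1) := by
  have pascal (n : ℕ) : (n + 1 + (j + 1)).choose (n + 1) =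
      (n + (j + 1)).choose n + (n + 1 + j).choose (n + 1) := by
    rw [show n + 1 + (j + 1) = n + (j + 1) + 1 by omega, show n + 1 + j = n + (j + 1) by omega]
    exact Nat.choose_succ_succ' _ _
  simp only [altChooseSum, sum_range_succ' _ m, pascal, Nat.cast_add, mul_add, sum_add_distrib,
    pow_succ, mul_neg_one, neg_mul, sum_neg_distrib, Nat.choose_zero_right]
  ring

lemma altChooseSum_add_altChooseSum_sub_one (j m : ℕ) :
    altChooseSum (j + 1) m + altChooseSum (j + 1) (m - 1) = altChooseSum j m := by
  cases m with
  | zero => simp [altChooseSum]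
  | succ m => rw [Nat.add_sub_cancel]; exact altChooseSum_succ_add_altChooseSum j m

lemma altChooseSum_zero_add_two (m : ℕ) : altChooseSum 0 (m + 2) = altChooseSum 0 m := by
  simp [altChooseSum, sum_range_succ, pow_succ]

lemma altChooseSum_recurrence (j m : ℕ) :
    altChooseSum (j + 2) m + altChooseSum (j + 2) (m - 1) - altChooseSum (j + 2) (m - 2)
      - altChooseSum (j + 2) (m - 3) = altChooseSum j m - altChooseSum j (m - 1) := by
  have h₁ := altChooseSum_add_altChooseSum_sub_one (j + 1) m
  have h₂ := altChooseSum_add_altChooseSum_sub_one (j + 1) (m - 2)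
  have h₃ := altChooseSum_add_altChooseSum_sub_one j m
  have h₄ := altChooseSum_add_altChooseSum_sub_one j (m - 1)
  rw [show m - 2 - 1 = m - 3 by omega] at h₂
  rw [show m - 1 - 1 = m - 2 by omega] at h₄
  linear_combination h₁ - h₂ + h₃ - h₄

lemma altChooseSum_one_recurrence (m : ℕ) :
    altChooseSum 1 (m + 3) + altChooseSum 1 (m + 2) - altChooseSum 1 (m + 1)
      - altChooseSum 1 m = 0 := by
  linear_combination altChooseSum_succ_add_altChooseSum 0 (m + 2)
    - altChooseSum_succ_add_altChooseSum 0 m + altChooseSum_zero_add_two (m + 1)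

/-- For all integers c ≥ 6 and g ≥ 1,
t(c,g) = t(c−1,g) + t(c−2,g−1) + t(c−2,g) + t(c−3,g−1) − t(c−3,g). -/
theorem tKnot_recurrence (c g : ℕ) (hc : 6 ≤ c) (hg : 1 ≤ g) :
    tKnot c g =
      tKnot (c - 1) g + tKnot (c - 2) (g - 1) + tKnot (c - 2) g +
        tKnot (c - 3) (g - 1) - tKnot (c - 3) g := by
  obtain ⟨d, rfl⟩ : ∃ d, c = d + 6 := ⟨c - 6, by omega⟩
  obtain ⟨g, rfl⟩ : ∃ g', g = g' + 1 := ⟨g - 1, by omega⟩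
  rcases g with _ | g
  · have hzero (c : ℕ) : tKnot c 0 = 0 := if_pos rfl
    simp only [tKnot_add_one_right, hzero, mul_zero, zero_add, mul_one, Nat.reduceSubDiff]
    linear_combination -(-1) ^ d * altChooseSum_one_recurrence (d + 1)
  · simp only [tKnot_add_one_right, Nat.add_sub_cancel, Nat.reduceSubDiff]
    set m := d + 2 - 2 * g
    rw [show d + 6 - 2 * (g + 1 + 1) = m by omega, show d + 5 - 2 * (g + 1 + 1) = m - 1 by omega,
      show d + 4 - 2 * (g + 1) = m by omega, show d + 4 - 2 * (g + 1 + 1) = m - 2 by omega,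
      show d + 3 - 2 * (g + 1) = m - 1 by omega, show d + 3 - 2 * (g + 1 + 1) = m - 3 by omega]
    linear_combination (-1) ^ (d + 1) * altChooseSum_recurrence (2 * g + 1) m
end

section
/- Let n ≥ 1 and let a_1, …, a_n be nonnegative real numbers. Suppose the sequence is quasi-symmetric, i.e. either left-dominated (a_{n−j+1} ≤ a_j ≤ a_{n−j} for all 1 ≤ j ≤ ⌊n/2⌋) or right-dominated (a_j ≤ a_{n−j+1} ≤ a_{j+1} for all 1 ≤ j ≤ ⌊n/2⌋). Define m := (n+1)/2 if n is odd, m := n/2 if n is even and the sequence is left-dominated, and m := n/2 + 1 if n is even and the sequence is right-dominated. Then a_j ≤ a_m for every 1 ≤ j ≤ n, and moreover 2·Σ_{j=1}^{m} a_j ≥ Σ_{j=1}^{n} a_j and 2·Σ_{j=m}^{n} a_j ≥ Σ_{j=1}^{n} a_j. (That is, the index m is simultaneously a mode and a median of the distribution with weights a_1, …, a_n.) -/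
/-!
Reflecting the indices, `j ↦ n + 1 - j`, turns a right-dominated sequence into a left-dominated
one and carries the index `n / 2 + 1` to `(n + 1) / 2`, so only the left-dominated case needs an
argument. There the chain `a j ≤ a (n - j) ≤ a (j + 1)` shows that the sequence increases up to
the middle, and every term past the middle is bounded by its mirror image `a (n + 1 - j) ≤ a j`
on the left. Pairing each index of one half with its mirror image in the other half gives the two
median inequalities.
-/

open Finset

theorem Finset.sum_Icc_consecutive {M : Type*} [AddCommMonoid M] (f : ℕ → M) {l m n : ℕ}
    (hlm : l ≤ m + 1) (hmn : m ≤ n) :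
    ∑ j ∈ Icc l m, f j + ∑ j ∈ Icc (m + 1) n, f j = ∑ j ∈ Icc l n, f j := by
  simp only [← Ico_add_one_right_eq_Icc]
  exact sum_Ico_consecutive f hlm (by omega)

theorem Finset.sum_Icc_reflect {M : Type*} [AddCommMonoid M] (f : ℕ → M) (N : ℕ) {l u : ℕ}
    (hl : l ≤ N) (hu : u ≤ N) :
    ∑ j ∈ Icc l u, f (N - j) = ∑ j ∈ Icc (N - u) (N - l), f j := by
  refine sum_nbij' (N - ·) (N - ·) ?_ ?_ ?_ ?_ ?_ <;>
    intro j hj <;> simp only [mem_Icc] at hj ⊢ <;> first | rfl | omega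

def IsLeftDominated (n : ℕ) (a : ℕ → ℝ) : Prop :=
  ∀ j, 1 ≤ j → j ≤ n / 2 → a (n - j + 1) ≤ a j ∧ a j ≤ a (n - j)

def IsRightDominated (n : ℕ) (a : ℕ → ℝ) : Prop :=
  ∀ j, 1 ≤ j → j ≤ n / 2 → a j ≤ a (n - j + 1) ∧ a (n - j + 1) ≤ a (j + 1)

def IsModeMedian (n : ℕ) (a : ℕ → ℝ) (m : ℕ) : Prop :=
  (∀ j, 1 ≤ j → j ≤ n → a j ≤ a m) ∧
    2 * ∑ j ∈ Icc 1 m, a j ≥ ∑ j ∈ Icc 1 n, a j ∧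
    2 * ∑ j ∈ Icc m n, a j ≥ ∑ j ∈ Icc 1 n, a j

variable {n : ℕ} {a : ℕ → ℝ}

theorem IsRightDominated.isLeftDominated_reflect (h : IsRightDominated n a) :
    IsLeftDominated n (fun j => a (n + 1 - j)) := by
  intro j hj1 hj2
  obtain ⟨hle, hle'⟩ := h j hj1 hj2
  dsimp only
  rw [show n + 1 - (n - j + 1) = j by omega, show n + 1 - (n - j) = j + 1 by omega,
    show n + 1 - j = n - j + 1 by omega]
  exact ⟨hle, hle'⟩

theorem IsModeMedian.of_reflect {m : ℕ} (h : IsModeMedian n (fun j => a (n + 1 - j)) m)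
    (hm : m ≤ n + 1) : IsModeMedian n a (n + 1 - m) := by
  obtain ⟨hmode, hlow, hhigh⟩ := h
  simp only at hmode hlow hhigh
  have htotal := sum_Icc_reflect a (n + 1) (l := 1) (u := n) (by omega) (by omega)
  rw [show n + 1 - n = 1 by omega, show n + 1 - 1 = n by omega] at htotal
  refine ⟨fun j hj1 hjn => ?_, ?_, ?_⟩
  · simpa [show n + 1 - (n + 1 - j) = j by omega] using hmode (n + 1 - j) (by omega) (by omega)
  · rwa [htotal, sum_Icc_reflect a (n + 1) hm (by omega), show n + 1 - n = 1 by omega] at hhigh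
  · rwa [htotal, sum_Icc_reflect a (n + 1) (by omega) hm, show n + 1 - 1 = n by omega] at hlow

namespace IsLeftDominated

variable (h : IsLeftDominated n a)
include h

theorem monotoneOn : MonotoneOn a (Set.Icc 1 (n / 2)) := by
  refine monotoneOn_of_le_add_one Set.ordConnected_Icc ?_
  rintro j - ⟨hj1, -⟩ ⟨-, hj2⟩
  have hmirror := (h (j + 1) (by omega) hj2).1
  rw [show n - (j + 1) + 1 = n - j by omega] at hmirror
  exact (h j hj1 (by omega)).2.trans hmirror

theorem le_mid {j : ℕ} (hj1 : 1 ≤ j) (hjn : j ≤ n) : a j ≤ a ((n + 1) / 2) := by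
  have hmid : n - n / 2 = (n + 1) / 2 := by omega
  have hleft : ∀ k, 1 ≤ k → k ≤ n / 2 → a k ≤ a ((n + 1) / 2) := fun k hk1 hk2 =>
    (h.monotoneOn ⟨hk1, hk2⟩ ⟨by omega, le_rfl⟩ hk2).trans
      (hmid ▸ (h (n / 2) (by omega) le_rfl).2)
  rcases lt_trichotomy j ((n + 1) / 2) with hlt | rfl | hgt
  · exact hleft j hj1 (by omega)
  · rfl
  · have hmirror := (h (n - j + 1) (by omega) (by omega)).1
    rw [show n - (n - j + 1) + 1 = j by omega] at hmirror
    exact hmirror.trans (hleft _ (by omega) (by omega))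

variable (ha : ∀ j, 1 ≤ j → j ≤ n → 0 ≤ a j)
include ha

theorem sum_upper_le_sum_lower :
    ∑ j ∈ Icc ((n + 1) / 2 + 1) n, a j ≤ ∑ j ∈ Icc 1 ((n + 1) / 2), a j :=
  calc ∑ j ∈ Icc ((n + 1) / 2 + 1) n, a j
      = ∑ j ∈ Icc 1 (n / 2), a (n + 1 - j) := by
        rw [sum_Icc_reflect a (n + 1) (by omega) (by omega)]
        congr 2
        omega
    _ ≤ ∑ j ∈ Icc 1 (n / 2), a j := sum_le_sum fun j hj => by
        rw [mem_Icc] at hj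
        simpa [show n + 1 - j = n - j + 1 by omega] using (h j hj.1 hj.2).1
    _ ≤ ∑ j ∈ Icc 1 ((n + 1) / 2), a j :=
        sum_le_sum_of_subset_of_nonneg (Icc_subset_Icc_right (by omega)) fun j hj _ => by
          rw [mem_Icc] at hj
          exact ha j hj.1 (by omega)

theorem sum_lower_le_sum_upper (hn : 1 ≤ n) :
    ∑ j ∈ Icc 1 ((n + 1) / 2 - 1), a j ≤ ∑ j ∈ Icc ((n + 1) / 2) n, a j :=
  calc ∑ j ∈ Icc 1 ((n + 1) / 2 - 1), a j
      ≤ ∑ j ∈ Icc 1 ((n + 1) / 2 - 1), a (n - j) := sum_le_sum fun j hj => by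
        rw [mem_Icc] at hj
        exact (h j hj.1 (by omega)).2
    _ = ∑ j ∈ Icc (n / 2 + 1) (n - 1), a j := by
        rw [sum_Icc_reflect a n hn (by omega)]
        congr 2
        omega
    _ ≤ ∑ j ∈ Icc ((n + 1) / 2) n, a j :=
        sum_le_sum_of_subset_of_nonneg (Icc_subset_Icc (by omega) (by omega)) fun j hj _ => by
          rw [mem_Icc] at hj
          exact ha j (by omega) hj.2

theorem isModeMedian (hn : 1 ≤ n) : IsModeMedian n a ((n + 1) / 2) := by
  refine ⟨fun j => h.le_mid, ?_, ?_⟩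
  · rw [← sum_Icc_consecutive a (l := 1) (m := (n + 1) / 2) (n := n) (by omega) (by omega)]
    linarith [h.sum_upper_le_sum_lower ha]
  · rw [← sum_Icc_consecutive a (l := 1) (m := (n + 1) / 2 - 1) (n := n) (by omega) (by omega),
      show (n + 1) / 2 - 1 + 1 = (n + 1) / 2 by omega]
    linarith [h.sum_lower_le_sum_upper ha hn]

end IsLeftDominated

/-- Let n ≥ 1 and a₁, …, aₙ be nonnegative reals. If the sequence is left-dominated
quasi-symmetric (aₙ₋ⱼ₊₁ ≤ aⱼ ≤ aₙ₋ⱼ for 1 ≤ j ≤ ⌊n/2⌋), then with m := (n+1)/2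
(which is (n+1)/2 for odd n and n/2 for even n), m is a mode and a median; if the
sequence is right-dominated quasi-symmetric (aⱼ ≤ aₙ₋ⱼ₊₁ ≤ aⱼ₊₁ for 1 ≤ j ≤ ⌊n/2⌋),
then the same holds with m := n/2 + 1 (which is (n+1)/2 for odd n and n/2 + 1 for
even n). Here "m is a mode and a median" means aⱼ ≤ aₘ for all 1 ≤ j ≤ n, and
2·Σ_{j=1}^{m} aⱼ ≥ Σ_{j=1}^{n} aⱼ and 2·Σ_{j=m}^{n} aⱼ ≥ Σ_{j=1}^{n} aⱼ. -/
theorem quasiSymmetric_mode_eq_median (n : ℕ) (hn : 1 ≤ n) (a : ℕ → ℝ)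
    (ha : ∀ j, 1 ≤ j → j ≤ n → 0 ≤ a j) :
    ((∀ j, 1 ≤ j → j ≤ n / 2 → a (n - j + 1) ≤ a j ∧ a j ≤ a (n - j)) →
      ((∀ j, 1 ≤ j → j ≤ n → a j ≤ a ((n + 1) / 2)) ∧
        2 * ∑ j ∈ Finset.Icc 1 ((n + 1) / 2), a j ≥ ∑ j ∈ Finset.Icc 1 n, a j ∧
        2 * ∑ j ∈ Finset.Icc ((n + 1) / 2) n, a j ≥ ∑ j ∈ Finset.Icc 1 n, a j)) ∧
    ((∀ j, 1 ≤ j → j ≤ n / 2 → a j ≤ a (n - j + 1) ∧ a (n - j + 1) ≤ a (j + 1)) →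
      ((∀ j, 1 ≤ j → j ≤ n → a j ≤ a (n / 2 + 1)) ∧
        2 * ∑ j ∈ Finset.Icc 1 (n / 2 + 1), a j ≥ ∑ j ∈ Finset.Icc 1 n, a j ∧
        2 * ∑ j ∈ Finset.Icc (n / 2 + 1) n, a j ≥ ∑ j ∈ Finset.Icc 1 n, a j)) := by
  refine ⟨fun hL => IsLeftDominated.isModeMedian hL ha hn, fun hR => ?_⟩
  have hreflect : IsModeMedian n a (n + 1 - (n + 1) / 2) :=
    ((IsRightDominated.isLeftDominated_reflect hR).isModeMedian
      (fun j hj1 hjn => ha _ (by omega) (by omega)) hn).of_reflect (by omega)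
  rwa [show n + 1 - (n + 1) / 2 = n / 2 + 1 by omega] at hreflect
end

section
/- For every integer c ≥ 3, the sequence (t_p(c,1), t_p(c,2), …, t_p(c,N)) with N := ⌊(c−1)/2⌋ is right-dominated quasi-symmetric; that is, for all integers j with 1 ≤ j ≤ ⌊N/2⌋, t_p(c,j) ≤ t_p(c, N−j+1) ≤ t_p(c, j+1). -/
/-!
Let `N = ⌊(c-1)/2⌋` and `S(m,r) = C(m,r) + C(m-2,r) + C(m-4,r) + ⋯`. Pascal's rule gives the
hockey-stick identity `S(m+1,r) + S(m,r) = C(m+2,r+1)`, so for `g ≥ 2` the alternating sum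
defining `t_p(c,g)` telescopes to `t_p(c,g) = S(N-2, g-2)`.
Every row `C(m-2i, ·)` is symmetric and unimodal, so `S(m,r) ≥ S(m,s)` whenever `r ≤ s` and
`m ≤ r + s`; with the hockey-stick identity this turns into `S(m+1,r) ≤ S(m+1,s)` when `r ≤ s`
and `r + s = m`. These are the two halves of right-dominated quasi-symmetry, except at `j = 1`,
where `t_p(c,1) ∈ {0,1}` is compared with `t_p(c,N) = S(N-2,N-2) = 1`.
-/

/-- `tpKnot c g` is t_p(c,g), the number of words of palindromic type representing
2-bridge knots of crossing number `c` and genus `g`, given by the explicit formula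
t_p(c,g) = (-1)^(c'-g-1) * Σ_{n=0}^{c'-g-1} (-1)^n * binom(n+g-1, n) with
c' = ⌊(c+1)/2⌋, the sum being empty when c' - g - 1 < 0, and t_p(c,0) = 0. -/
def tpKnot (c g : ℕ) : ℤ :=
  if g = 0 then 0
  else (-1 : ℤ) ^ ((c + 1) / 2 - g - 1) *
    ∑ n ∈ Finset.range ((c + 1) / 2 - g), (-1 : ℤ) ^ n * (Nat.choose (n + g - 1) n)

namespace Nat

theorem choose_le_choose_of_le_of_add_le {n r s : ℕ} (hrs : r ≤ s) (hn : r + s ≤ n) :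
    n.choose r ≤ n.choose s := by
  have below_half : ∀ t, r ≤ t → t ≤ n / 2 → n.choose r ≤ n.choose t := by
    intro t hrt
    induction t, hrt using Nat.le_induction with
    | base => exact fun _ => le_rfl
    | succ t _ ih =>
      exact fun ht => (ih (by omega)).trans (choose_le_succ_of_lt_half_left (by omega))
  rcases le_or_gt s (n / 2) with hs | hs
  · exact below_half s hrs hs
  · rw [← choose_symm (by omega : s ≤ n)]
    exact below_half (n - s) (by omega) (by omega)

theorem choose_le_choose_of_le_of_le_add {n r s : ℕ} (hrs : r ≤ s) (hn : n ≤ r + s) :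
    n.choose s ≤ n.choose r := by
  rcases le_or_gt s n with hs | hs
  · rw [← choose_symm hs]
    exact choose_le_choose_of_le_of_add_le (by omega) (by omega)
  · simp [choose_eq_zero_of_lt hs]

end Nat

def everyOtherChooseSum : ℕ → ℕ → ℕ
  | 0, r => Nat.choose 0 r
  | 1, r => Nat.choose 1 r
  | m + 2, r => Nat.choose (m + 2) r + everyOtherChooseSum m r

namespace everyOtherChooseSum

theorem eq_zero_of_lt : ∀ {m r : ℕ}, m < r → everyOtherChooseSum m r = 0
  | 0, _, h | 1, _, h => by simp [everyOtherChooseSum, Nat.choose_eq_zero_of_lt h]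
  | m + 2, r, h => by
    simp [everyOtherChooseSum, Nat.choose_eq_zero_of_lt h, eq_zero_of_lt (by omega : m < r)]

theorem self : ∀ r : ℕ, everyOtherChooseSum r r = 1
  | 0 | 1 => rfl
  | m + 2 => by simp [everyOtherChooseSum, eq_zero_of_lt (by omega : m < m + 2)]

theorem succ_add (m r : ℕ) :
    everyOtherChooseSum (m + 1) r + everyOtherChooseSum m r = Nat.choose (m + 2) (r + 1) := by
  induction m with
  | zero => rcases r with _ | _ | r <;> simp [everyOtherChooseSum, Nat.choose]
  | succ m ih =>
    rw [everyOtherChooseSum, add_right_comm, add_assoc, ih, ← Nat.choose_succ_succ]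

theorem anti_of_le_add :
    ∀ {m r s : ℕ}, r ≤ s → m ≤ r + s → everyOtherChooseSum m s ≤ everyOtherChooseSum m r
  | 0, _, _, hrs, hm | 1, _, _, hrs, hm => Nat.choose_le_choose_of_le_of_le_add hrs hm
  | m + 2, _, _, hrs, hm =>
    Nat.add_le_add (Nat.choose_le_choose_of_le_of_le_add hrs hm)
      (anti_of_le_add hrs (by omega))

theorem mono_of_add_eq {m r s : ℕ} (hrs : r ≤ s) (hm : r + s = m) :
    everyOtherChooseSum (m + 1) r ≤ everyOtherChooseSum (m + 1) s := by
  have hr := succ_add m r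
  have hs := succ_add m s
  have h_prev : everyOtherChooseSum m s ≤ everyOtherChooseSum m r :=
    anti_of_le_add hrs (by omega)
  have h_row : Nat.choose (m + 2) (r + 1) ≤ Nat.choose (m + 2) (s + 1) :=
    Nat.choose_le_choose_of_le_of_add_le (by omega) (by omega)
  omega

theorem alternating_sum_choose (r : ℕ) : ∀ M : ℕ,
    ∑ n ∈ Finset.range (M + 1), (-1 : ℤ) ^ n * (Nat.choose (n + r + 1) n : ℤ)
      = (-1 : ℤ) ^ M * everyOtherChooseSum (M + r) r
  | 0 => by simp [self]
  | M + 1 => by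
    have h_last : (Nat.choose (M + 1 + r + 1) (M + 1) : ℤ)
        = everyOtherChooseSum (M + r + 1) r + everyOtherChooseSum (M + r) r := by
      rw [Nat.choose_symm_of_eq_add (by omega : M + 1 + r + 1 = (M + 1) + (r + 1)),
        show M + 1 + r + 1 = M + r + 2 by omega, ← succ_add]
      push_cast; rfl
    rw [Finset.sum_range_succ, alternating_sum_choose r M, h_last,
      show M + 1 + r = M + r + 1 by omega]
    ring

end everyOtherChooseSum

theorem tpKnot_eq_everyOtherChooseSum {c g : ℕ} (hg₂ : 2 ≤ g) (hg : g ≤ (c - 1) / 2) :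
    tpKnot c g = everyOtherChooseSum ((c - 1) / 2 - 2) (g - 2) := by
  obtain ⟨r, rfl⟩ : ∃ r, g = r + 2 := ⟨g - 2, by omega⟩
  obtain ⟨M, hM⟩ : ∃ M, (c - 1) / 2 - (r + 2) = M := ⟨_, rfl⟩
  have h_len : (c + 1) / 2 - (r + 2) = M + 1 := by omega
  have h_top : (c - 1) / 2 - 2 = M + r := by omega
  have h_diag : ∀ n : ℕ, n + (r + 2) - 1 = n + r + 1 := fun n => by omega
  rw [tpKnot, if_neg (by omega), h_len, Nat.add_sub_cancel, h_top, Nat.add_sub_cancel]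
  simp only [h_diag]
  rw [everyOtherChooseSum.alternating_sum_choose, ← mul_assoc, ← pow_add,
    Even.neg_one_pow ⟨M, rfl⟩, one_mul]

theorem tpKnot_one_le_one (c : ℕ) : tpKnot c 1 ≤ 1 := by
  simp only [tpKnot, one_ne_zero, if_false, add_tsub_cancel_right, Nat.choose_self,
    Nat.cast_one, mul_one, neg_one_geom_sum]
  split
  · simp
  · rcases Nat.even_or_odd ((c + 1) / 2 - 1 - 1) with h | h <;> simp [h.neg_one_pow]

theorem tpKnot_right_dominated_general (c : ℕ) (j : ℕ) (hj : 1 ≤ j)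
    (hj' : j ≤ ((c - 1) / 2) / 2) :
    tpKnot c j ≤ tpKnot c ((c - 1) / 2 - j + 1) ∧
      tpKnot c ((c - 1) / 2 - j + 1) ≤ tpKnot c (j + 1) := by
  set N := (c - 1) / 2
  have h_mirror : tpKnot c (N - j + 1) = everyOtherChooseSum (N - 2) (N - j - 1) := by
    rw [tpKnot_eq_everyOtherChooseSum (by omega) (by omega),
      show N - j + 1 - 2 = N - j - 1 by omega]
  have h_next : tpKnot c (j + 1) = everyOtherChooseSum (N - 2) (j - 1) := by
    rw [tpKnot_eq_everyOtherChooseSum (by omega) (by omega), show j + 1 - 2 = j - 1 by omega]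
  refine ⟨?_, ?_⟩
  · rw [h_mirror]
    rcases eq_or_lt_of_le hj with rfl | hj₂
    · rw [show N - 1 - 1 = N - 2 by omega, everyOtherChooseSum.self]
      exact_mod_cast tpKnot_one_le_one c
    · rw [tpKnot_eq_everyOtherChooseSum (by omega) (by omega),
        show N - 2 = N - 3 + 1 by omega]
      exact_mod_cast everyOtherChooseSum.mono_of_add_eq (by omega) (by omega)
  · rw [h_mirror, h_next]
    exact_mod_cast everyOtherChooseSum.anti_of_le_add (by omega) (by omega)

/-- For every c ≥ 3, the sequence (t_p(c,1), …, t_p(c,N)) with N = ⌊(c−1)/2⌋ is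
right-dominated quasi-symmetric: t_p(c,j) ≤ t_p(c, N−j+1) ≤ t_p(c, j+1) for
all 1 ≤ j ≤ ⌊N/2⌋. -/
theorem tpKnot_right_dominated (c : ℕ) (hc : 3 ≤ c) (j : ℕ) (hj : 1 ≤ j)
    (hj' : j ≤ ((c - 1) / 2) / 2) :
    tpKnot c j ≤ tpKnot c ((c - 1) / 2 - j + 1) ∧
      tpKnot c ((c - 1) / 2 - j + 1) ≤ tpKnot c (j + 1) :=
  tpKnot_right_dominated_general c j hj hj'
end

section
/- For every integer c ≥ 3, set N := ⌊(c−1)/2⌋. If c is odd, the sequence (t(c,1), …, t(c,N)) is left-dominated quasi-symmetric: t(c, N−j+1) ≤ t(c,j) ≤ t(c, N−j) for all 1 ≤ j ≤ ⌊N/2⌋. If c is even, the sequence (t(c,1), …, t(c,N)) is right-dominated quasi-symmetric: t(c,j) ≤ t(c, N−j+1) ≤ t(c, j+1) for all 1 ≤ j ≤ ⌊N/2⌋. -/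
/-!
Let `a = altPascal` be Pascal's array with boundary values `a p 0 = (-1)^p` and `a 0 q = 1`. Its entries
are alternating sums of binomial coefficients, and `t(c,g) = a (c-1-2g) (2g)`, so all values of
`t(c,·)` lie on the antidiagonal `p + q = c - 1`. Along an antidiagonal `m`, the entries
`d q = a (m-q) q` interleave as `d 1 ≤ d m ≤ d 2 ≤ d (m-1) ≤ d 3 ≤ ⋯`: by Pascal's rule each
of these inequalities is the sum of two inequalities of the same kind on antidiagonal `m - 1`.
Reading the chain at the even positions `q = 2g` gives left-dominated quasi-symmetry for `m`
even and right-dominated quasi-symmetry for `m` odd.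
-/

open Finset

theorem sum_neg_one_pow_mul_choose_succ (p q : ℕ) :
    ∑ n ∈ range (p + 2), (-1 : ℤ) ^ n * ((n + (q + 1)).choose n : ℤ) =
      ∑ n ∈ range (p + 2), (-1 : ℤ) ^ n * ((n + q).choose n : ℤ) -
        ∑ n ∈ range (p + 1), (-1 : ℤ) ^ n * ((n + (q + 1)).choose n : ℤ) := by
  have pascal (k : ℕ) : ((k + 1 + (q + 1)).choose (k + 1) : ℤ) =
      ((k + (q + 1)).choose k : ℤ) + ((k + 1 + q).choose (k + 1) : ℤ) := by
    rw [show k + 1 + (q + 1) = k + (q + 1) + 1 by ring, Nat.choose_succ_succ,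
      show k + 1 + q = k + (q + 1) by ring]
    push_cast; rfl
  simp only [sum_range_succ' _ (p + 1), pascal, mul_add, sum_add_distrib, pow_succ]
  simp only [mul_neg_one, neg_mul, sum_neg_distrib, Nat.choose_zero_right]
  abel

def altPascal : ℕ → ℕ → ℤ
  | p, 0 => (-1) ^ p
  | 0, _ + 1 => 1
  | p + 1, q + 1 => altPascal p (q + 1) + altPascal (p + 1) q

namespace altPascal

theorem zero_right (p : ℕ) : altPascal p 0 = (-1) ^ p := by
  rw [altPascal]

theorem zero_left (q : ℕ) : altPascal 0 q = 1 := by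
  cases q <;> rw [altPascal]; rfl

theorem succ_succ (p q : ℕ) :
    altPascal (p + 1) (q + 1) = altPascal p (q + 1) + altPascal (p + 1) q := by
  rw [altPascal]

theorem one_right (p : ℕ) : altPascal p 1 = if Even p then 1 else 0 := by
  induction p with
  | zero => exact zero_left 1
  | succ p ih =>
    rw [succ_succ, ih, zero_right]
    rcases Nat.even_or_odd p with hp | hp
    · simp [hp, hp.add_one.neg_one_pow, Nat.not_even_iff_odd.mpr hp.add_one]
    · simp [Nat.not_even_iff_odd.mpr hp, hp.add_one, hp.add_one.neg_one_pow]

theorem one_right_le_one (p : ℕ) : altPascal p 1 ≤ 1 := by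
  rw [one_right]; split_ifs <;> norm_num

theorem one_le_two_right (p : ℕ) : 1 ≤ altPascal p 2 := by
  induction p with
  | zero => exact (zero_left 2).ge
  | succ p ih =>
    have : 0 ≤ altPascal (p + 1) 1 := by rw [one_right]; split_ifs <;> norm_num
    calc 1 ≤ altPascal p 2 + altPascal (p + 1) 1 := by omega
      _ = altPascal (p + 1) 2 := (succ_succ p 1).symm

theorem succ_eq_sum (p q : ℕ) :
    altPascal p (q + 1) = (-1) ^ p * ∑ n ∈ range (p + 1), (-1 : ℤ) ^ n * ((n + q).choose n : ℤ) := by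
  induction p generalizing q with
  | zero => simp [zero_left]
  | succ p ihp =>
    induction q with
    | zero =>
      rw [zero_add, one_right]
      simp only [add_zero, Nat.choose_self, Nat.cast_one, mul_one, neg_one_geom_sum,
        Nat.even_add_one, ite_not]
      split_ifs with hp
      · simp [hp.add_one.neg_one_pow]
      · simp [(Nat.not_even_iff_odd.mp hp).add_one.neg_one_pow]
    | succ q ihq =>
      rw [succ_succ, ihp, ihq, sum_neg_one_pow_mul_choose_succ]
      ring

/-- With `m = u + v + 2` and `t = u + 1`, this is `d t ≤ d (m + 1 - t) ≤ d (t + 1)` for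
`d q = a (m - q) q`. -/
theorem zigzag : ∀ {u v : ℕ}, u ≤ v →
    altPascal (v + 1) (u + 1) ≤ altPascal u (v + 2) ∧ altPascal u (v + 2) ≤ altPascal v (u + 2)
  | 0, v, _ => by
    rw [zero_left]
    exact ⟨one_right_le_one (v + 1), one_le_two_right v⟩
  | u + 1, v + 1, huv => by
    have prev := zigzag (u := u) (v := v + 1) (by omega)
    rcases (Nat.le_of_succ_le_succ huv).eq_or_lt with rfl | hlt
    · refine ⟨?_, le_rfl⟩
      rw [succ_succ (u + 1) (u + 1), succ_succ u (u + 2)]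
      linarith [prev.1]
    · have next := zigzag (u := u + 1) (v := v) hlt
      rw [succ_succ (v + 1) (u + 1), succ_succ u (v + 2), succ_succ v (u + 2)]
      exact ⟨by linarith [prev.1, next.1], by linarith [prev.2, next.2]⟩

theorem le_swap {u v : ℕ} (huv : u ≤ v) : altPascal (v + 1) (u + 1) ≤ altPascal (u + 1) (v + 1) := by
  rcases le_or_gt (u + 2) v with h | h
  · obtain ⟨w, rfl⟩ : ∃ w, v = w + 1 := ⟨v - 1, by omega⟩
    exact (zigzag huv).1.trans <| (zigzag huv).2.trans (zigzag (by omega)).1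
  · obtain rfl | rfl : v = u ∨ v = u + 1 := by omega
    · exact le_rfl
    · exact (zigzag le_self_add).1.trans (zigzag le_self_add).2

theorem zigzag_skip {u w : ℕ} (huw : u ≤ w) : altPascal u (w + 3) ≤ altPascal w (u + 3) := by
  rcases huw.eq_or_lt with rfl | hlt
  · exact le_rfl
  · exact (zigzag (v := w + 1) (by omega)).2.trans <| (zigzag hlt).1.trans (zigzag hlt).2

end altPascal

theorem tKnot_eq_altPascal {c g : ℕ} (hg : g ≠ 0) (hgc : 2 * g < c) :
    tKnot c g = altPascal (c - 1 - 2 * g) (2 * g) := by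
  obtain ⟨p, rfl⟩ : ∃ p, c = p + 2 * g + 1 := ⟨c - 1 - 2 * g, by omega⟩
  obtain ⟨q, hq⟩ : ∃ q, 2 * g = q + 1 := ⟨2 * g - 1, by omega⟩
  have hsign : (-1 : ℤ) ^ (p + 2 * g + 1 - 1) = (-1) ^ p := by
    rw [Nat.add_sub_cancel, pow_add, pow_mul]; norm_num
  rw [tKnot, if_neg hg, hsign, hq, altPascal.succ_eq_sum,
    show p + (q + 1) + 1 - (q + 1) = p + 1 by omega, show p + (q + 1) + 1 - 1 - (q + 1) = p by omega]
  simp only [show ∀ n, n + (q + 1) - 1 = n + q by omega]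

theorem tKnot_quasi_symmetric_general (c : ℕ) :
    (Odd c → ∀ j, 1 ≤ j → j ≤ ((c - 1) / 2) / 2 →
      tKnot c ((c - 1) / 2 - j + 1) ≤ tKnot c j ∧
        tKnot c j ≤ tKnot c ((c - 1) / 2 - j)) ∧
    (Even c → ∀ j, 1 ≤ j → j ≤ ((c - 1) / 2) / 2 →
      tKnot c j ≤ tKnot c ((c - 1) / 2 - j + 1) ∧
        tKnot c ((c - 1) / 2 - j + 1) ≤ tKnot c (j + 1)) := by
  refine ⟨fun hodd j hj hjN => ?_, fun heven j hj hjN => ?_⟩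
  · have hc := Nat.odd_iff.mp hodd
    rw [tKnot_eq_altPascal (g := (c - 1) / 2 - j + 1) (by omega) (by omega),
      tKnot_eq_altPascal (g := j) (by omega) (by omega),
      tKnot_eq_altPascal (g := (c - 1) / 2 - j) (by omega) (by omega)]
    constructor
    · convert (altPascal.zigzag (u := 2 * j - 2) (v := c - 1 - 2 * j) (by omega)).2 using 2 <;> omega
    · convert altPascal.le_swap (u := 2 * j - 1) (v := c - 2 - 2 * j) (by omega) using 2 <;> omega
  · have hc := Nat.even_iff.mp heven
    rw [tKnot_eq_altPascal (g := (c - 1) / 2 - j + 1) (by omega) (by omega),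
      tKnot_eq_altPascal (g := j) (by omega) (by omega),
      tKnot_eq_altPascal (g := j + 1) (by omega) (by omega)]
    constructor
    · convert (altPascal.zigzag (u := 2 * j - 1) (v := c - 2 - 2 * j) (by omega)).1 using 2 <;> omega
    · convert altPascal.zigzag_skip (u := 2 * j - 1) (w := c - 3 - 2 * j) (by omega) using 2 <;> omega

/-- For every c ≥ 3, with N = ⌊(c−1)/2⌋: if c is odd, the sequence (t(c,1), …, t(c,N))
is left-dominated quasi-symmetric (t(c,N−j+1) ≤ t(c,j) ≤ t(c,N−j) for 1 ≤ j ≤ ⌊N/2⌋),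
and if c is even it is right-dominated quasi-symmetric
(t(c,j) ≤ t(c,N−j+1) ≤ t(c,j+1) for 1 ≤ j ≤ ⌊N/2⌋). -/
theorem tKnot_quasi_symmetric (c : ℕ) (hc : 3 ≤ c) :
    (Odd c → ∀ j, 1 ≤ j → j ≤ ((c - 1) / 2) / 2 →
      tKnot c ((c - 1) / 2 - j + 1) ≤ tKnot c j ∧
        tKnot c j ≤ tKnot c ((c - 1) / 2 - j)) ∧
    (Even c → ∀ j, 1 ≤ j → j ≤ ((c - 1) / 2) / 2 →
      tKnot c j ≤ tKnot c ((c - 1) / 2 - j + 1) ∧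
        tKnot c ((c - 1) / 2 - j + 1) ≤ tKnot c (j + 1)) :=
  tKnot_quasi_symmetric_general c
end

section
/- For every integer c ≥ 3, set N := ⌊(c−1)/2⌋, m := ⌊(c+2)/4⌋, and S := Σ_{g=1}^{N} (t(c,g) + t_p(c,g)). Then 2·Σ_{g=1}^{m} (t(c,g) + t_p(c,g)) ≥ S and 2·Σ_{g=m}^{N} (t(c,g) + t_p(c,g)) ≥ S. (That is, the median of the genus distribution of 2-bridge knots with crossing number c is ⌊(c+2)/4⌋.) -/
/-!
Both `t(c, g)` and `t_p(c, g)` are coefficients of `1 / ((1 + x) (1 - x) ^ k)`, and since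
`(1 - x) - x = 1 - 2x` these telescope against the coefficients of
`x ^ 2 / ((1 + x) (1 - 2x) (1 - x) ^ k)`. Hence three times the number of knots of genus greater
than `j` is twice a partial row sum of Pascal's triangle plus an error bounded by a single
binomial coefficient. By the symmetry of the row, a partial row sum is compared with half of the
full row sum, and for the median `m = ⌊(c + 2) / 4⌋` the tails beyond `m` and beyond `m - 1`
fall on either side of half the total (the cases `c ≤ 6` are checked by evaluation).
-/

open Finset

/-- Coefficient of `x ^ n` in `1 / ((1 + x) * (1 - x) ^ k)`. -/
def qCoeff : ℕ → ℕ → ℤ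
  | _, 0 => 1
  | 0, n + 1 => -qCoeff 0 n
  | k + 1, n + 1 => qCoeff k (n + 1) + qCoeff (k + 1) n

@[simp]
lemma qCoeff_zero_right (k : ℕ) : qCoeff k 0 = 1 := by
  cases k <;> rw [qCoeff]

lemma qCoeff_succ_succ (k n : ℕ) :
    qCoeff (k + 1) (n + 1) = qCoeff k (n + 1) + qCoeff (k + 1) n := by
  rw [qCoeff]

lemma qCoeff_zero_left (n : ℕ) : qCoeff 0 n = (-1) ^ n := by
  induction n with
  | zero => simp
  | succ n ih => rw [qCoeff, ih, pow_succ, mul_neg_one]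

lemma qCoeff_succ_add_qCoeff (k n : ℕ) :
    qCoeff k (n + 1) + qCoeff k n = ((n + k).choose (n + 1) : ℤ) := by
  induction k generalizing n with
  | zero => simp [qCoeff_zero_left, pow_succ]
  | succ k ihk =>
    induction n with
    | zero =>
      have h := ihk 0
      simp only [qCoeff_succ_succ, qCoeff_zero_right, zero_add, Nat.choose_one_right] at h ⊢
      push_cast at h ⊢
      linarith
    | succ n ihn =>
      have h := ihk (n + 1)
      rw [show n + (k + 1) = n + 1 + k by ring] at ihn
      rw [qCoeff_succ_succ, show n + 1 + (k + 1) = (n + 1 + k) + 1 by ring,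
        Nat.choose_succ_succ', Nat.cast_add]
      linarith [qCoeff_succ_succ k n]

lemma neg_one_pow_mul_sum_eq_qCoeff (k M : ℕ) :
    (-1 : ℤ) ^ M * ∑ n ∈ range (M + 1), (-1 : ℤ) ^ n * ((n + k).choose n : ℤ) =
      qCoeff (k + 1) M := by
  induction M with
  | zero => simp
  | succ M ih =>
    have hadd := qCoeff_succ_add_qCoeff (k + 1) M
    rw [show M + (k + 1) = M + 1 + k by ring] at hadd
    rw [sum_range_succ, mul_add, ← mul_assoc, ← pow_add, Even.neg_one_pow ⟨M + 1, rfl⟩, one_mul,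
      pow_succ, mul_comm _ (-1 : ℤ), mul_assoc, ih]
    linarith

lemma qCoeff_one_nonneg_and_le_one (n : ℕ) : 0 ≤ qCoeff 1 n ∧ qCoeff 1 n ≤ 1 := by
  induction n with
  | zero => simp
  | succ n ih =>
    have h := qCoeff_succ_add_qCoeff 1 n
    rw [Nat.choose_self, Nat.cast_one] at h
    omega

lemma qCoeff_nonneg (k n : ℕ) : 0 ≤ qCoeff (k + 1) n := by
  induction k generalizing n with
  | zero => exact (qCoeff_one_nonneg_and_le_one n).1
  | succ k ihk =>
    induction n with
    | zero => simp
    | succ n ihn => rw [qCoeff_succ_succ]; linarith [ihk (n + 1)]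

lemma one_le_qCoeff (k n : ℕ) : 1 ≤ qCoeff (k + 2) n := by
  have hmono : Monotone (qCoeff (k + 2)) := monotone_nat_of_le_succ fun n => by
    rw [qCoeff_succ_succ]; linarith [qCoeff_nonneg k (n + 1)]
  simpa using hmono (Nat.zero_le n)

lemma qCoeff_le_choose (k n : ℕ) : qCoeff (k + 1) n ≤ ((n + k).choose n : ℤ) := by
  cases n with
  | zero => simp
  | succ n =>
    have h := qCoeff_succ_add_qCoeff (k + 1) n
    rw [show n + (k + 1) = n + 1 + k by ring] at h
    linarith [qCoeff_nonneg k n]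

/-- Three times the coefficient of `x ^ n` in `x ^ 2 / ((1 + x) * (1 - 2 * x) * (1 - x) ^ k)`. -/
def tailCoeff (k : ℕ) : ℕ → ℤ
  | 0 => 0
  | 1 => 0
  | n + 2 => 2 * ((∑ i ∈ range (n + 1), (n + k).choose i : ℕ) : ℤ) + qCoeff k n

lemma tailCoeff_of_le_one {k n : ℕ} (hn : n ≤ 1) : tailCoeff k n = 0 := by
  interval_cases n <;> rfl

lemma tailCoeff_zero_left (n : ℕ) : tailCoeff 0 (n + 2) = 2 ^ (n + 1) + (-1) ^ n := by
  rw [tailCoeff, add_zero, Nat.sum_range_choose, qCoeff_zero_left]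
  push_cast
  ring

lemma three_mul_qCoeff_succ (k n : ℕ) :
    3 * qCoeff (k + 1) n = tailCoeff k (n + 2) - tailCoeff (k + 1) (n + 1) := by
  cases n with
  | zero => simp [tailCoeff]
  | succ n =>
    have hrow : n + 1 + k = n + (k + 1) := by ring
    have hadd := qCoeff_succ_add_qCoeff (k + 1) n
    rw [show n + (k + 1) = n + 1 + k by ring] at hadd
    simp only [tailCoeff, hrow, sum_range_succ _ (n + 1), Nat.cast_add]
    rw [← hrow]
    linarith [qCoeff_succ_succ k n]

lemma three_mul_qCoeff_add_two (k n : ℕ) :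
    3 * qCoeff (k + 2) n = tailCoeff k (n + 2) - tailCoeff (k + 2) n := by
  cases n with
  | zero => simp [tailCoeff]
  | succ n =>
    have h1 := three_mul_qCoeff_succ k (n + 1)
    have h2 := three_mul_qCoeff_succ (k + 1) n
    linarith [qCoeff_succ_succ (k + 1) n]

lemma sum_range_choose_add_sum_range_choose (n k : ℕ) :
    ∑ i ∈ range (n + 1), (n + k + 1).choose i + ∑ i ∈ range (k + 1), (n + k + 1).choose i =
      2 ^ (n + k + 1) := by
  rw [← Nat.sum_range_choose, show n + k + 1 + 1 = (n + 1) + (k + 1) by ring,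
    sum_range_add (fun i => (n + k + 1).choose i) (n + 1) (k + 1), add_right_inj,
    ← sum_range_reflect]
  refine sum_congr rfl fun j hj => Nat.choose_symm_of_eq_add ?_
  rw [mem_range] at hj
  omega

lemma sum_range_choose_le_sum_range_choose (L : ℕ) {a b : ℕ} (hab : a ≤ b) :
    ∑ i ∈ range (a + 1), L.choose i ≤ ∑ i ∈ range (b + 1), L.choose i :=
  sum_le_sum_of_subset (range_subset_range.mpr (by omega))

lemma two_pow_le_two_mul_sum_range_choose {n k : ℕ} (h : k ≤ n) :
    2 ^ (n + k + 1) ≤ 2 * ∑ i ∈ range (n + 1), (n + k + 1).choose i := by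
  have := sum_range_choose_le_sum_range_choose (n + k + 1) h
  have := sum_range_choose_add_sum_range_choose n k
  omega

lemma two_mul_sum_range_choose_le {n k : ℕ} (h : n ≤ k) :
    2 * ∑ i ∈ range (n + 1), (n + k + 1).choose i ≤ 2 ^ (n + k + 1) := by
  have := sum_range_choose_le_sum_range_choose (n + k + 1) h
  have := sum_range_choose_add_sum_range_choose n k
  omega

lemma two_mul_sum_range_choose_add_choose_le {n k : ℕ} (h : n < k) :
    2 * ∑ i ∈ range (n + 1), (n + k + 1).choose i + (n + k + 1).choose (n + 1) ≤
      2 ^ (n + k + 1) := by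
  have hmono := sum_range_choose_le_sum_range_choose (n + k + 1) (show n + 1 ≤ k from h)
  have := sum_range_choose_add_sum_range_choose n k
  rw [sum_range_succ] at hmono
  omega

lemma tailCoeff_succ_add_two (k n : ℕ) :
    tailCoeff (k + 1) (n + 2) =
      2 * ((∑ i ∈ range (n + 1), (n + k + 1).choose i : ℕ) : ℤ) + qCoeff (k + 1) n := by
  rw [tailCoeff, ← add_assoc]

lemma two_pow_add_qCoeff_le_tailCoeff {n k : ℕ} (h : k ≤ n) :
    2 ^ (n + k + 1) + qCoeff (k + 1) n ≤ tailCoeff (k + 1) (n + 2) := by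
  rw [tailCoeff_succ_add_two]
  have := two_pow_le_two_mul_sum_range_choose h
  zify at this
  push_cast
  linarith

lemma tailCoeff_le {n k : ℕ} (h : n ≤ k) :
    tailCoeff (k + 1) (n + 2) ≤ 2 ^ (n + k + 1) + (n + k).choose n := by
  rw [tailCoeff_succ_add_two]
  have := two_mul_sum_range_choose_le h
  have := qCoeff_le_choose k n
  zify at *
  linarith

lemma tailCoeff_add_choose_le {n k : ℕ} (h : n < k) :
    tailCoeff (k + 1) (n + 2) + (n + k).choose (n + 1) ≤ 2 ^ (n + k + 1) := by
  rw [tailCoeff_succ_add_two]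
  have hsum := two_mul_sum_range_choose_add_choose_le h
  have := qCoeff_le_choose k n
  rw [Nat.choose_succ_succ'] at hsum
  zify at *
  linarith

lemma choose_le_choose_add_add (a i d : ℕ) : a.choose i ≤ (a + d).choose (i + d) := by
  induction d with
  | zero => rfl
  | succ d ih =>
    rw [← add_assoc, ← add_assoc, Nat.choose_succ_succ']
    exact ih.trans (Nat.le_add_right _ _)

lemma choose_lt_choose_add_add_add_one {a i : ℕ} (d e : ℕ) (hi : i ≤ a) (hid : 1 ≤ i + d) :
    a.choose i < (a + d + e + 1).choose (i + d) := by
  obtain ⟨j, hj⟩ : ∃ j, i + d = j + 1 := ⟨i + d - 1, by omega⟩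
  calc a.choose i ≤ (a + d).choose (i + d) := choose_le_choose_add_add a i d
    _ ≤ (a + d + e).choose (i + d) := Nat.choose_le_choose _ (Nat.le_add_right _ _)
    _ < (a + d + e + 1).choose (i + d) := by
      rw [hj, Nat.choose_succ_succ']
      have := Nat.choose_pos (show j ≤ a + d + e by omega)
      omega

lemma three_mul_tKnot_succ (c j : ℕ) :
    3 * tKnot c (j + 1) =
      tailCoeff (2 * j) (c - 2 * j - 1) - tailCoeff (2 * (j + 1)) (c - 2 * (j + 1) - 1) := by
  rcases Nat.lt_or_ge c (2 * j + 3) with h | h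
  · rw [tailCoeff_of_le_one (by omega), tailCoeff_of_le_one (by omega)]
    simp [tKnot, show c - 2 * (j + 1) = 0 by omega]
  · obtain ⟨M, rfl⟩ : ∃ M, c = M + 2 * j + 3 := ⟨c - 2 * j - 3, by omega⟩
    have hq : tKnot (M + 2 * j + 3) (j + 1) = qCoeff (2 * j + 2) M := by
      rw [← neg_one_pow_mul_sum_eq_qCoeff (2 * j + 1) M, tKnot, if_neg (by omega),
        show M + 2 * j + 3 - 1 = M + 2 * (j + 1) by omega, pow_add, pow_mul, neg_one_sq, one_pow,
        mul_one, show M + 2 * j + 3 - 2 * (j + 1) = M + 1 by omega]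
      refine congrArg _ (sum_congr rfl fun n _ => ?_)
      rw [show n + 2 * (j + 1) - 1 = n + (2 * j + 1) by omega]
    rw [hq, three_mul_qCoeff_add_two, show M + 2 * j + 3 - 2 * j - 1 = M + 2 by omega,
      show M + 2 * j + 3 - 2 * (j + 1) - 1 = M by omega, mul_add_one]

lemma three_mul_tpKnot_succ (c j : ℕ) :
    3 * tpKnot c (j + 1) =
      tailCoeff j ((c + 1) / 2 - j) - tailCoeff (j + 1) ((c + 1) / 2 - (j + 1)) := by
  unfold tpKnot
  generalize (c + 1) / 2 = p
  rcases Nat.lt_or_ge p (j + 2) with h | h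
  · rw [tailCoeff_of_le_one (by omega), tailCoeff_of_le_one (by omega)]
    simp [show p - (j + 1) = 0 by omega]
  · obtain ⟨M, rfl⟩ : ∃ M, p = M + j + 2 := ⟨p - j - 2, by omega⟩
    rw [if_neg (by omega), show M + j + 2 - (j + 1) - 1 = M by omega,
      show M + j + 2 - (j + 1) = M + 1 by omega, show M + j + 2 - j = M + 2 by omega]
    simp only [Nat.add_succ_sub_one]
    rw [neg_one_pow_mul_sum_eq_qCoeff, three_mul_qCoeff_succ]

/-- `genusTail c j` is three times the number of 2-bridge knots of crossing number `c` and
genus greater than `j`. -/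
def genusTail (c j : ℕ) : ℤ :=
  tailCoeff (2 * j) (c - 2 * j - 1) + tailCoeff j ((c + 1) / 2 - j)

lemma three_mul_sum_Ioc_eq_genusTail_sub (c : ℕ) {a b : ℕ} (hab : a ≤ b) :
    3 * ∑ g ∈ Ioc a b, (tKnot c g + tpKnot c g) = genusTail c a - genusTail c b := by
  induction b, hab using Nat.le_induction with
  | base => simp
  | succ b hab ih =>
    rw [sum_Ioc_succ_top hab, mul_add, ih, mul_add, three_mul_tKnot_succ, three_mul_tpKnot_succ]
    unfold genusTail
    ring

lemma genusTail_of_half_le {c j : ℕ} (hj : (c - 1) / 2 ≤ j) : genusTail c j = 0 := by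
  rw [genusTail, tailCoeff_of_le_one (by omega), tailCoeff_of_le_one (by omega), add_zero]

lemma abs_genusTail_zero_sub_le {c : ℕ} (hc : 3 ≤ c) :
    |genusTail c 0 - (2 ^ (c - 2) + 2 ^ ((c + 1) / 2 - 1))| ≤ 2 := by
  obtain ⟨n, hn⟩ : ∃ n, c - 1 = n + 2 := ⟨c - 3, by omega⟩
  obtain ⟨n', hn'⟩ : ∃ n', (c + 1) / 2 = n' + 2 := ⟨(c + 1) / 2 - 2, by omega⟩
  rw [genusTail, mul_zero, Nat.sub_zero, Nat.sub_zero, hn, hn', tailCoeff_zero_left,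
    tailCoeff_zero_left, show c - 2 = n + 1 by omega, show n' + 2 - 1 = n' + 1 by omega]
  rcases neg_one_pow_eq_or ℤ n with h | h <;> rcases neg_one_pow_eq_or ℤ n' with h' | h' <;>
    rw [h, h', abs_le] <;> constructor <;> linarith

lemma two_mul_genusTail_median_add_two_le {c : ℕ} (hc : 7 ≤ c) :
    2 * genusTail c ((c + 2) / 4) + 2 ≤ 2 ^ (c - 2) + 2 ^ ((c + 1) / 2 - 1) := by
  set m := (c + 2) / 4 with hm
  set p := (c + 1) / 2 with hp
  obtain ⟨n, k, hn, hk, hnk⟩ : ∃ n k, c - 2 * m - 1 = n + 2 ∧ 2 * m = k + 1 ∧ n < k :=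
    ⟨c - 2 * m - 3, 2 * m - 1, by omega, by omega, by omega⟩
  obtain ⟨n', k', hn', hk', hnk'⟩ : ∃ n' k', p - m = n' + 2 ∧ m = k' + 1 ∧ n' ≤ k' :=
    ⟨p - m - 2, m - 1, by omega, by omega, by omega⟩
  have hT := tailCoeff_add_choose_le hnk
  have hP := tailCoeff_le hnk'
  -- the palindromic excess is absorbed by the slack of the non-palindromic part
  have hC := choose_lt_choose_add_add_add_one (n + 1 - n') (k - k' - 2)
    (by omega : n' ≤ n' + k') (by omega)
  rw [show n' + k' + (n + 1 - n') + (k - k' - 2) + 1 = n + k by omega,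
    show n' + (n + 1 - n') = n + 1 by omega] at hC
  have hC' : ((n' + k').choose n' : ℤ) + 1 ≤ (n + k).choose (n + 1) := by exact_mod_cast hC
  rw [genusTail, hn, hk, hn', hk', show c - 2 = n + k + 1 + 1 by omega,
    show p - 1 = n' + k' + 1 + 1 by omega, pow_succ _ (n + k + 1), pow_succ _ (n' + k' + 1)]
  linarith

lemma le_two_mul_genusTail_pred_median {c : ℕ} (hc : 6 ≤ c) :
    2 ^ (c - 2) + 2 ^ ((c + 1) / 2 - 1) + 2 ≤ 2 * genusTail c ((c + 2) / 4 - 1) := by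
  set j := (c + 2) / 4 - 1 with hj
  set p := (c + 1) / 2 with hp
  obtain ⟨n, k, hn, hk, hkn⟩ : ∃ n k, c - 2 * j - 1 = n + 2 ∧ 2 * j = k + 2 ∧ k + 1 ≤ n :=
    ⟨c - 2 * j - 3, 2 * j - 2, by omega, by omega, by omega⟩
  obtain ⟨n', k', hn', hk', hkn'⟩ : ∃ n' k', p - j = n' + 2 ∧ j = k' + 1 ∧ k' ≤ n' :=
    ⟨p - j - 2, j - 1, by omega, by omega, by omega⟩
  have hT := two_pow_add_qCoeff_le_tailCoeff hkn
  have hP := two_pow_add_qCoeff_le_tailCoeff hkn'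
  rw [genusTail, hn, hk, hn', hk', show c - 2 = n + (k + 1) + 1 + 1 by omega,
    show p - 1 = n' + k' + 1 + 1 by omega, pow_succ _ (n + (k + 1) + 1), pow_succ _ (n' + k' + 1)]
  linarith [one_le_qCoeff k n, qCoeff_nonneg k' n']

/-- For every c ≥ 3, with N = ⌊(c−1)/2⌋, m = ⌊(c+2)/4⌋ and
S = Σ_{g=1}^{N} (t(c,g) + t_p(c,g)): both 2·Σ_{g=1}^{m} (t(c,g)+t_p(c,g)) ≥ S and
2·Σ_{g=m}^{N} (t(c,g)+t_p(c,g)) ≥ S; that is, the median of the genus distribution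
of 2-bridge knots with crossing number c is ⌊(c+2)/4⌋. -/
theorem genus_median (c : ℕ) (hc : 3 ≤ c) :
    2 * ∑ g ∈ Finset.Icc 1 ((c + 2) / 4), (tKnot c g + tpKnot c g) ≥
        ∑ g ∈ Finset.Icc 1 ((c - 1) / 2), (tKnot c g + tpKnot c g) ∧
      2 * ∑ g ∈ Finset.Icc ((c + 2) / 4) ((c - 1) / 2), (tKnot c g + tpKnot c g) ≥
        ∑ g ∈ Finset.Icc 1 ((c - 1) / 2), (tKnot c g + tpKnot c g) := by
  rcases Nat.lt_or_ge c 7 with hsmall | hbig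
  · interval_cases c <;> constructor <;> decide
  have hS := three_mul_sum_Ioc_eq_genusTail_sub c (Nat.zero_le ((c - 1) / 2))
  have hL := three_mul_sum_Ioc_eq_genusTail_sub c (Nat.zero_le ((c + 2) / 4))
  have hR := three_mul_sum_Ioc_eq_genusTail_sub c (show (c + 2) / 4 - 1 ≤ (c - 1) / 2 by omega)
  rw [genusTail_of_half_le le_rfl] at hS hR
  rw [← Icc_add_one_left_eq_Ioc, zero_add] at hS hL
  rw [← Icc_add_one_left_eq_Ioc, Nat.sub_add_cancel (by omega)] at hR
  have h0 := abs_le.mp (abs_genusTail_zero_sub_le hc)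
  have hmed := two_mul_genusTail_median_add_two_le hbig
  have hpred := le_two_mul_genusTail_pred_median (by omega : 6 ≤ c)
  constructor <;> linarith
end

section
/- For all integers c ≥ 6, the total square genus satisfies the recurrence g2(c) = g2(c−1) + 2·g2(c−2) + g(c) + 2·g(c−3) − g(c−1). -/
/-- `gTotal c` is the total genus g(c) = Σ_{i=1}^{⌊(c−1)/2⌋} i·t(c,i) of T(c). -/
def gTotal (c : ℕ) : ℤ := ∑ i ∈ Finset.Icc 1 ((c - 1) / 2), (i : ℤ) * tKnot c i

/-- `g2Total c` is the total square genus g²(c) = Σ_{i=1}^{⌊(c−1)/2⌋} i²·t(c,i) of T(c). -/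
def g2Total (c : ℕ) : ℤ := ∑ i ∈ Finset.Icc 1 ((c - 1) / 2), (i : ℤ) ^ 2 * tKnot c i

/-! Pairing consecutive crossing numbers telescopes the alternating sum defining `tKnot`:
t(c,i) + t(c-1,i) = C(c-2, 2i-1). So g(c) + g(c-1) and g²(c) + g²(c-1) are the odd binomial
moments Σᵢ i·C(c-2, 2i-1) and Σᵢ i²·C(c-2, 2i-1), and in terms of these pair sums the
recurrence says that the second difference of Σᵢ (i² - i)·C(n, 2i-1) is 2·Σᵢ i·C(n, 2i-1).
Since the second difference of C(·, j) is C(· - 2, j - 2), summation by parts turns the second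
difference of Σᵢ w(i)·C(n, 2i-1) into Σᵢ w(i+1)·C(n, 2i-1), and (i+1)² - (i+1) = i² + i. -/

open Finset

lemma tKnot_eq_zero_of_le {c g : ℕ} (h : c ≤ 2 * g) : tKnot c g = 0 := by
  simp [tKnot, Nat.sub_eq_zero_of_le h]

lemma tKnot_add_two_add_tKnot_add_one (m k : ℕ) :
    tKnot (m + 2) (k + 1) + tKnot (m + 1) (k + 1) = m.choose (2 * k + 1) := by
  rcases le_or_gt m (2 * k) with hm | hm
  · rw [tKnot_eq_zero_of_le (by omega), tKnot_eq_zero_of_le (by omega),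
      Nat.choose_eq_zero_of_lt (by omega)]
    simp
  obtain ⟨d, rfl⟩ : ∃ d, m = d + (2 * k + 1) := ⟨m - (2 * k + 1), by omega⟩
  have hsign : (-1 : ℤ) ^ (d + (2 * k + 1) + 1) * (-1) ^ d = 1 := by
    rw [← pow_add]
    exact Even.neg_one_pow ⟨d + k + 1, by ring⟩
  simp only [tKnot, if_neg k.succ_ne_zero, Nat.add_sub_cancel]
  rw [show d + (2 * k + 1) + 2 - 2 * (k + 1) = d + 1 by omega,
    show d + (2 * k + 1) + 1 - 2 * (k + 1) = d by omega, sum_range_succ,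
    show d + 2 * (k + 1) - 1 = d + (2 * k + 1) by omega, Nat.choose_symm_add,
    show d + (2 * k + 1) + 2 - 1 = d + (2 * k + 1) + 1 by omega]
  linear_combination (((d + (2 * k + 1)).choose (2 * k + 1) : ℕ) : ℤ) * hsign

-- `gTotal` and `g2Total` are, definitionally, the cases `f i = i` and `f i = i ^ 2`.
def genusMoment (f : ℕ → ℤ) (c : ℕ) : ℤ := ∑ i ∈ Icc 1 ((c - 1) / 2), f i * tKnot c i

def oddBinomialMoment (f : ℕ → ℤ) (N n : ℕ) : ℤ :=
  ∑ k ∈ range N, f (k + 1) * n.choose (2 * k + 1)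

lemma genusMoment_eq_sum_range (f : ℕ → ℤ) {c N : ℕ} (hN : c ≤ 2 * N + 2) :
    genusMoment f c = ∑ k ∈ range N, f (k + 1) * tKnot c (k + 1) := by
  rw [genusMoment, ← Ico_add_one_right_eq_Icc, sum_Ico_eq_sum_range, Nat.add_sub_cancel]
  simp only [add_comm 1]
  refine sum_subset (range_subset_range.mpr (by omega)) fun k _ hk => ?_
  rw [tKnot_eq_zero_of_le (by simp only [mem_range] at hk; omega), mul_zero]

lemma genusMoment_add_two_add_genusMoment_add_one (f : ℕ → ℤ) {m N : ℕ} (hN : m ≤ 2 * N) :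
    genusMoment f (m + 2) + genusMoment f (m + 1) = oddBinomialMoment f N m := by
  rw [genusMoment_eq_sum_range f (c := m + 2) (N := N) (by omega),
    genusMoment_eq_sum_range f (c := m + 1) (N := N) (by omega), ← sum_add_distrib]
  refine sum_congr rfl fun k _ => ?_
  rw [← mul_add, tKnot_add_two_add_tKnot_add_one]

lemma oddBinomialMoment_second_difference (f : ℕ → ℤ) {n N : ℕ} (hN : n + 2 ≤ 2 * N) :
    oddBinomialMoment f N (n + 2) - 2 * oddBinomialMoment f N (n + 1) + oddBinomialMoment f N n =
      oddBinomialMoment (fun i => f (i + 1)) N n := by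
  set h : ℕ → ℤ := fun k => f (k + 1) * ((n + 1).choose (2 * k) - n.choose (2 * k)) with hh
  have step (k : ℕ) : f (k + 1) * (n + 2).choose (2 * k + 1)
      - 2 * (f (k + 1) * (n + 1).choose (2 * k + 1)) + f (k + 1) * n.choose (2 * k + 1)
      - f (k + 2) * n.choose (2 * k + 1) = h k - h (k + 1) := by
    have p1 := Nat.choose_succ_succ' (n + 1) (2 * k)
    have p2 := Nat.choose_succ_succ' n (2 * k)
    have p3 := Nat.choose_succ_succ' n (2 * k + 1)
    simp only [hh, show 2 * (k + 1) = 2 * k + 1 + 1 by ring]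
    push_cast [p1, p2, p3]
    ring
  have h_zero : h 0 = 0 := by simp [hh]
  have h_N : h N = 0 := by
    simp [hh, Nat.choose_eq_zero_of_lt (by omega : n + 1 < 2 * N),
      Nat.choose_eq_zero_of_lt (by omega : n < 2 * N)]
  rw [← sub_eq_zero]
  simp only [oddBinomialMoment, mul_sum, ← sum_sub_distrib, ← sum_add_distrib]
  rw [sum_congr rfl fun k _ => step k, sum_range_sub', h_zero, h_N, sub_zero]

/-- For all integers c ≥ 6, the total square genus satisfies
g²(c) = g²(c−1) + 2·g²(c−2) + g(c) + 2·g(c−3) − g(c−1). -/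
theorem g2Total_recurrence (c : ℕ) (hc : 6 ≤ c) :
    g2Total c =
      g2Total (c - 1) + 2 * g2Total (c - 2) + gTotal c + 2 * gTotal (c - 3) - gTotal (c - 1) := by
  obtain ⟨n, rfl⟩ : ∃ n, c = n + 4 := ⟨c - 4, by omega⟩
  rw [show n + 4 - 1 = n + 3 by omega, show n + 4 - 2 = n + 2 by omega,
    show n + 4 - 3 = n + 1 by omega]
  have g2_pair (m : ℕ) (hm : m ≤ n + 2) : g2Total (m + 2) + g2Total (m + 1) =
      oddBinomialMoment (fun i => (i : ℤ) ^ 2) (n + 1) m :=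
    genusMoment_add_two_add_genusMoment_add_one _ (by omega)
  have g_pair (m : ℕ) (hm : m ≤ n + 2) : gTotal (m + 2) + gTotal (m + 1) =
      oddBinomialMoment (fun i => (i : ℤ)) (n + 1) m :=
    genusMoment_add_two_add_genusMoment_add_one _ (by omega)
  have hN : n + 2 ≤ 2 * (n + 1) := by omega
  have hsq := oddBinomialMoment_second_difference (fun i => (i : ℤ) ^ 2) hN
  have hid := oddBinomialMoment_second_difference (fun i => (i : ℤ)) hN
  have hweights : oddBinomialMoment (fun i => ((i + 1 : ℕ) : ℤ) ^ 2) (n + 1) n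
      - oddBinomialMoment (fun i => ((i + 1 : ℕ) : ℤ)) (n + 1) n
      = oddBinomialMoment (fun i => (i : ℤ) ^ 2) (n + 1) n
        + oddBinomialMoment (fun i => (i : ℤ)) (n + 1) n := by
    simp only [oddBinomialMoment, ← sum_sub_distrib, ← sum_add_distrib]
    refine sum_congr rfl fun k _ => ?_
    push_cast
    ring
  linear_combination g2_pair (n + 2) le_rfl - 2 * g2_pair (n + 1) (by omega)
    - g_pair (n + 2) le_rfl + 2 * g_pair (n + 1) (by omega) - 2 * g_pair n (by omega)
    + hsq - hid + hweights
end

section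
/- For all integers c ≥ 6, the total square palindromic genus satisfies the recurrence g2_p(c) = 2·g2_p(c−2) + 2·g_p(c−2) + t_p(c−2) + (−1)^{⌊(c+1)/2⌋}. -/
/-- `tpTotal c` is t_p(c) = Σ_{g=1}^{⌊(c−1)/2⌋} t_p(c,g), the number of words of palindromic type. -/
def tpTotal (c : ℕ) : ℤ := ∑ g ∈ Finset.Icc 1 ((c - 1) / 2), tpKnot c g

/-- `gpTotal c` is the total palindromic genus g_p(c) = Σ_{i=1}^{⌊(c−1)/2⌋} i·t_p(c,i). -/
def gpTotal (c : ℕ) : ℤ := ∑ i ∈ Finset.Icc 1 ((c - 1) / 2), (i : ℤ) * tpKnot c i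

/-- `g2pTotal c` is the total square palindromic genus g²_p(c) = Σ_{i=1}^{⌊(c−1)/2⌋} i²·t_p(c,i). -/
def g2pTotal (c : ℕ) : ℤ := ∑ i ∈ Finset.Icc 1 ((c - 1) / 2), (i : ℤ) ^ 2 * tpKnot c i


/-! With `m = ⌊(c+1)/2⌋`, the numbers `t(m, g) := t_p(c, g)` obey Pascal's rule
`t(m+1, g+1) = t(m, g) + t(m, g+1)` (inherited from the binomial coefficients in the alternating
sums), except at `g = 0`, where a boundary term `(-1)^(m+1)` appears. Summing against a weight `f`
therefore gives `Σ f(i) t(m+1, i) = Σ (f(i) + f(i+1)) t(m, i) + f(1) (-1)^(m+1)`, and for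
`f(i) = i²` the new weight is `2i² + 2i + 1`. -/

open Finset

lemma Finset.sum_Icc_one_eq_sum_range {M : Type*} [AddCommMonoid M] {F : ℕ → M} (hF : F 0 = 0)
    (n : ℕ) : ∑ i ∈ Icc 1 n, F i = ∑ i ∈ range (n + 1), F i := by
  refine sum_subset (fun i => by simp) fun i hi hni => ?_
  obtain rfl : i = 0 := by simp at hi hni; omega
  exact hF

def palTerm (m g : ℕ) : ℤ :=
  if g = 0 then 0
  else (-1 : ℤ) ^ (m - g - 1) *
    ∑ n ∈ range (m - g), (-1 : ℤ) ^ n * (Nat.choose (n + g - 1) n)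

lemma tpKnot_eq_palTerm (c g : ℕ) : tpKnot c g = palTerm ((c + 1) / 2) g := rfl

lemma palTerm_zero_right (m : ℕ) : palTerm m 0 = 0 := if_pos rfl

lemma palTerm_of_le {m g : ℕ} (h : m ≤ g) : palTerm m g = 0 := by
  simp [palTerm, Nat.sub_eq_zero_of_le h]

def altBinomSum (h k : ℕ) : ℤ := ∑ n ∈ range k, (-1 : ℤ) ^ n * (Nat.choose (n + h) n)

lemma altBinomSum_succ_succ (h k : ℕ) :
    altBinomSum (h + 1) (k + 1) = altBinomSum h (k + 1) - altBinomSum (h + 1) k := by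
  induction k with
  | zero => simp [altBinomSum]
  | succ k ih =>
    simp only [altBinomSum, sum_range_succ] at ih ⊢
    have pascal : ((k + 1 + (h + 1)).choose (k + 1) : ℤ)
        = ((k + (h + 1)).choose k : ℤ) + ((k + 1 + h).choose (k + 1) : ℤ) := by
      rw [show k + 1 + (h + 1) = k + (h + 1) + 1 by omega, Nat.choose_succ_succ',
        show k + 1 + h = k + (h + 1) by omega]
      push_cast; ring
    linear_combination ih + (-1 : ℤ) ^ (k + 1) * pascal

lemma palTerm_eq_altBinomSum (h k : ℕ) :
    palTerm (h + 1 + k) (h + 1) = (-1 : ℤ) ^ (k + 1) * altBinomSum h k := by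
  rcases k with _ | k
  · simp [altBinomSum, palTerm_of_le]
  · simp only [palTerm, altBinomSum, Nat.add_sub_cancel_left, Nat.add_sub_cancel,
      if_neg h.succ_ne_zero, show ∀ n, n + (h + 1) - 1 = n + h from fun n => by omega]
    ring

lemma palTerm_succ_succ (m h : ℕ) :
    palTerm (m + 1) (h + 2) = palTerm m (h + 1) + palTerm m (h + 2) := by
  rcases le_or_gt m (h + 1) with hm | hm
  · rw [palTerm_of_le (by omega), palTerm_of_le hm, palTerm_of_le (by omega), add_zero]
  obtain ⟨k, rfl⟩ : ∃ k, m = h + 1 + 1 + k := ⟨m - (h + 2), by omega⟩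
  rw [show h + 1 + 1 + k + 1 = (h + 1) + 1 + (k + 1) by omega,
    show h + 1 + 1 + k = h + 1 + (k + 1) by omega, palTerm_eq_altBinomSum, palTerm_eq_altBinomSum,
    show h + 1 + (k + 1) = (h + 1) + 1 + k by omega, palTerm_eq_altBinomSum, altBinomSum_succ_succ]
  ring

lemma two_mul_palTerm_one (m : ℕ) : 2 * palTerm (m + 1) 1 = 1 - (-1 : ℤ) ^ m := by
  have geom := geom_sum_mul_neg (-1 : ℤ) m
  have h := palTerm_eq_altBinomSum 0 m
  simp only [zero_add, add_comm 1 m, add_zero, Nat.choose_self, Nat.cast_one, mul_one,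
    altBinomSum] at h
  rw [h]
  have sign : (-1 : ℤ) ^ m * (-1) ^ m = 1 := pow_mul_pow_eq_one m (by norm_num)
  linear_combination (-1 : ℤ) ^ (m + 1) * geom + sign

lemma palTerm_succ_one (m : ℕ) : palTerm (m + 2) 1 = palTerm (m + 1) 1 + (-1 : ℤ) ^ m := by
  have h := two_mul_palTerm_one (m + 1)
  have h' := two_mul_palTerm_one m
  rw [pow_succ] at h
  linarith

lemma palTerm_add_two_add_one (m i : ℕ) :
    palTerm (m + 2) (i + 1)
      = palTerm (m + 1) i + palTerm (m + 1) (i + 1) + if i = 0 then (-1 : ℤ) ^ m else 0 := by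
  rcases i with _ | h
  · simp [palTerm_zero_right, palTerm_succ_one]
  · simp [palTerm_succ_succ]

lemma sum_range_mul_palTerm_succ (f : ℕ → ℤ) (m : ℕ) :
    ∑ i ∈ range (m + 2), f i * palTerm (m + 2) i
      = ∑ i ∈ range (m + 1), (f i + f (i + 1)) * palTerm (m + 1) i + f 1 * (-1 : ℤ) ^ m := by
  have shifted : ∑ i ∈ range (m + 1), f (i + 1) * palTerm (m + 1) (i + 1)
      = ∑ i ∈ range (m + 1), f i * palTerm (m + 1) i := by
    have h := sum_range_succ' (fun i => f i * palTerm (m + 1) i) (m + 1)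
    rwa [sum_range_succ, palTerm_of_le le_rfl, palTerm_zero_right, mul_zero, mul_zero,
      add_zero, add_zero, eq_comm] at h
  rw [sum_range_succ', palTerm_zero_right, mul_zero, add_zero]
  simp only [palTerm_add_two_add_one, mul_add, sum_add_distrib, shifted, mul_ite, mul_zero,
    sum_ite_eq', mem_range, add_mul, if_pos m.succ_pos, zero_add]
  ring

/-- For all integers c ≥ 6, the total square palindromic genus satisfies
g²_p(c) = 2·g²_p(c−2) + 2·g_p(c−2) + t_p(c−2) + (−1)^{⌊(c+1)/2⌋}. -/
theorem g2pTotal_recurrence (c : ℕ) (hc : 6 ≤ c) :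
    g2pTotal c =
      2 * g2pTotal (c - 2) + 2 * gpTotal (c - 2) + tpTotal (c - 2) + (-1 : ℤ) ^ ((c + 1) / 2) := by
  obtain ⟨m, hm⟩ : ∃ m, (c + 1) / 2 = m + 2 := ⟨(c + 1) / 2 - 2, by omega⟩
  have h1 : (c - 1) / 2 = m + 1 := by omega
  have h2 : (c - 2 + 1) / 2 = m + 1 := by omega
  have h3 : (c - 2 - 1) / 2 = m := by omega
  simp only [g2pTotal, gpTotal, tpTotal, tpKnot_eq_palTerm, hm, h1, h2, h3]
  simp (disch := simp [palTerm_zero_right]) only [sum_Icc_one_eq_sum_range]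
  rw [sum_range_mul_palTerm_succ, mul_sum, mul_sum, ← sum_add_distrib, ← sum_add_distrib]
  congr 1
  · refine sum_congr rfl fun i _ => ?_
    push_cast
    ring
  · ring
end

section
/- For all integers c ≥ 3, the total palindromic genus satisfies: if c is odd, then 18·g_p(c) = (3c+5)·2^{(c−3)/2} − 4·(−1)^{(c−1)/2}, and if c is even (so c ≥ 4), then 36·g_p(c) = (3c+2)·2^{(c−2)/2} + 8·(−1)^{c/2}. -/
open Finset

def Tm (m g : ℕ) : ℤ :=
  if g = 0 then 0
  else (-1 : ℤ) ^ (m - g - 1) *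
    ∑ n ∈ Finset.range (m - g), (-1 : ℤ) ^ n * (Nat.choose (n + g - 1) n)

def Fm (m : ℕ) : ℤ := ∑ i ∈ Finset.Icc 1 (m - 1), (i : ℤ) * Tm m i

lemma refl_sum (n : ℕ) :
    2 * ∑ j ∈ range (n + 1), ((j : ℤ) + 1) * (Nat.choose n j : ℤ)
      = ((n : ℤ) + 2) * 2 ^ n := by
  have h1 : ∑ j ∈ range (n + 1), ((j : ℤ) + 1) * (Nat.choose n j : ℤ)
      = ∑ j ∈ range (n + 1), ((n : ℤ) - j + 1) * (Nat.choose n j : ℤ) := by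
    rw [← Finset.sum_range_reflect (fun j => ((j : ℤ) + 1) * (Nat.choose n j : ℤ)) (n+1)]
    apply Finset.sum_congr rfl
    intro j hj
    have hj' : j ≤ n := by simp at hj; omega
    simp only [Nat.add_sub_cancel]
    rw [Nat.choose_symm hj']
    have : ((n - j : ℕ) : ℤ) = (n : ℤ) - j := by
      omega
    rw [this]
  have h2 : ∑ j ∈ range (n + 1), (Nat.choose n j : ℤ) = 2 ^ n := by
    have := Nat.sum_range_choose n
    have := congrArg (Nat.cast (R := ℤ)) this
    push_cast at this
    simpa using this
  calc 2 * ∑ j ∈ range (n + 1), ((j : ℤ) + 1) * (Nat.choose n j : ℤ)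
      = (∑ j ∈ range (n + 1), ((j : ℤ) + 1) * (Nat.choose n j : ℤ))
        + ∑ j ∈ range (n + 1), ((n : ℤ) - j + 1) * (Nat.choose n j : ℤ) := by
        rw [← h1]; ring
    _ = ∑ j ∈ range (n + 1), ((n : ℤ) + 2) * (Nat.choose n j : ℤ) := by
        rw [← Finset.sum_add_distrib]; apply Finset.sum_congr rfl; intros; ring
    _ = ((n : ℤ) + 2) * 2 ^ n := by rw [← Finset.mul_sum, h2]

lemma Tm_rec (m i : ℕ) (hm : 2 ≤ m) (h1 : 1 ≤ i) (h2 : i ≤ m) :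
    Tm (m + 1) i = -(Tm m i) + (Nat.choose (m - 1) (i - 1) : ℤ) := by
  have hi0 : i ≠ 0 := by omega
  rw [Tm, Tm, if_neg hi0, if_neg hi0]
  have hr : m + 1 - i = (m - i) + 1 := by omega
  rw [hr, Finset.sum_range_succ]
  have hc : m - i + i - 1 = m - 1 := by omega
  have hc2 : Nat.choose (m - 1) (m - i) = Nat.choose (m - 1) (i - 1) := by
    have hk : m - i ≤ m - 1 := by omega
    have := Nat.choose_symm hk
    rw [show m - 1 - (m - i) = i - 1 by omega] at this
    exact this.symm
  rw [hc, hc2]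
  rcases eq_or_lt_of_le h2 with h | h
  · subst h
    simp [Nat.sub_self]
  · obtain ⟨k, hk⟩ : ∃ k, m - i = k + 1 := ⟨m - i - 1, by omega⟩
    simp only [Nat.add_sub_cancel, hk]
    have hsq : ((-1:ℤ)^k)*((-1)^k) = 1 := by
      rw [← pow_add, ← two_mul, pow_mul]; norm_num
    rw [pow_succ]
    linear_combination ((Nat.choose (m-1) (i-1) : ℤ)) * hsq

lemma Tm_self (m : ℕ) : Tm m m = 0 := by
  simp [Tm, Nat.sub_self]

lemma Fm_rec (n : ℕ) (hn : 1 ≤ n) :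
    4 * Fm (n + 2) = -4 * Fm (n + 1) + ((n : ℤ) + 2) * 2 ^ (n + 1) := by
  have h1 : Fm (n + 2) = ∑ i ∈ Icc 1 (n + 1),
      ((i : ℤ) * (-(Tm (n + 1) i) + (Nat.choose n (i - 1) : ℤ))) := by
    rw [Fm]
    apply Finset.sum_congr rfl
    intro i hi
    rw [Finset.mem_Icc] at hi
    rw [Tm_rec (n + 1) i (by omega) hi.1 (by omega), Nat.add_sub_cancel]
  have h2 : ∑ i ∈ Icc 1 (n + 1), (i : ℤ) * Tm (n + 1) i = Fm (n + 1) := by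
    rw [Finset.sum_Icc_succ_top (by omega : 1 ≤ n + 1), Tm_self]
    simp [Fm]
  have h3 : ∑ i ∈ Icc 1 (n + 1), (i : ℤ) * (Nat.choose n (i - 1) : ℤ)
      = ∑ j ∈ range (n + 1), ((j : ℤ) + 1) * (Nat.choose n j : ℤ) := by
    apply Finset.sum_nbij' (fun i => i - 1) (fun j => j + 1)
    · intro i hi; rw [Finset.mem_Icc] at hi; simp; omega
    · intro j hj; rw [Finset.mem_range] at hj; rw [Finset.mem_Icc]; omega
    · intro i hi; rw [Finset.mem_Icc] at hi; omega
    · intro j hj; omega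
    · intro i hi
      rw [Finset.mem_Icc] at hi
      have : ((i - 1 : ℕ) : ℤ) = (i : ℤ) - 1 := by omega
      rw [this]
      ring
  have h4 := refl_sum n
  rw [h1]
  have h5 : ∑ i ∈ Icc 1 (n + 1),
      ((i : ℤ) * (-(Tm (n + 1) i) + (Nat.choose n (i - 1) : ℤ)))
      = -(∑ i ∈ Icc 1 (n + 1), (i : ℤ) * Tm (n + 1) i)
        + ∑ i ∈ Icc 1 (n + 1), (i : ℤ) * (Nat.choose n (i - 1) : ℤ) := by
    rw [← Finset.sum_neg_distrib, ← Finset.sum_add_distrib]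
    apply Finset.sum_congr rfl
    intros; ring
  rw [h5, h2, h3]
  have : (2:ℤ) ^ (n + 1) = 2 * 2 ^ n := by ring
  rw [this]
  linear_combination 2 * h4

lemma Fm_formula (m : ℕ) (hm : 2 ≤ m) :
    36 * Fm m = (3 * (m : ℤ) + 1) * 2 ^ m + 8 * (-1 : ℤ) ^ m := by
  induction m with
  | zero => omega
  | succ k ih =>
    rcases Nat.lt_or_ge k 2 with h | h
    · interval_cases k
      · omega
      · norm_num [Fm, Tm]
    · have hk := ih h
      obtain ⟨n, rfl⟩ : ∃ n, k = n + 1 := ⟨k - 1, by omega⟩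
      have hrec := Fm_rec n (by omega)
      push_cast
      push_cast at hk
      linear_combination 9 * hrec - hk

/-- bridge -/
lemma gpTotal_eq_Fm (c : ℕ) : gpTotal c = Fm ((c + 1) / 2) := by
  rw [gpTotal, Fm, show (c - 1) / 2 = (c + 1) / 2 - 1 by omega]
  rfl

/-- For all integers c ≥ 3: if c is odd then
18·g_p(c) = (3c+5)·2^{(c−3)/2} − 4·(−1)^{(c−1)/2}, and if c is even then
36·g_p(c) = (3c+2)·2^{(c−2)/2} + 8·(−1)^{c/2}. -/
theorem gpTotal_formula (c : ℕ) (hc : 3 ≤ c) :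
    (Odd c → 18 * gpTotal c = (3 * (c : ℤ) + 5) * 2 ^ ((c - 3) / 2) - 4 * (-1 : ℤ) ^ ((c - 1) / 2)) ∧
    (Even c → 36 * gpTotal c = (3 * (c : ℤ) + 2) * 2 ^ ((c - 2) / 2) + 8 * (-1 : ℤ) ^ (c / 2)) := by
  rw [gpTotal_eq_Fm]
  constructor
  · intro hodd
    obtain ⟨j, hj⟩ := hodd
    obtain ⟨k, rfl⟩ : ∃ k, j = k + 1 := ⟨j - 1, by omega⟩
    subst hj
    have key := Fm_formula (k + 2) (by omega)
    rw [show (2 * (k + 1) + 1 + 1) / 2 = k + 2 by omega,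
        show (2 * (k + 1) + 1 - 3) / 2 = k by omega,
        show (2 * (k + 1) + 1 - 1) / 2 = k + 1 by omega]
    have h2 : (2 : ℤ) ≠ 0 := two_ne_zero
    apply mul_left_cancel₀ h2
    push_cast at key ⊢
    linear_combination key
  · intro heven
    obtain ⟨j, hj⟩ := heven
    obtain ⟨k, rfl⟩ : ∃ k, j = k + 2 := ⟨j - 2, by omega⟩
    subst hj
    have key := Fm_formula (k + 2) (by omega)
    rw [show (k + 2 + (k + 2) + 1) / 2 = k + 2 by omega,
        show (k + 2 + (k + 2) - 2) / 2 = k + 1 by omega,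
        show (k + 2 + (k + 2)) / 2 = k + 2 by omega]
    push_cast at key ⊢
    linear_combination key
end

section
/- For all integers c ≥ 4, the total square genus satisfies 1728·g2(c) = (9c² + 15c − 16)·2^c − 1280·(−1)^c; equivalently, g2(c) = ((9c²+15c−16)·2^{c−6} − 20·(−1)^c)/27. -/
/-!
Since the alternating sums defining `t(c+1, g)` and `t(c, g)` differ by one term,
`t(c+1, g) + t(c, g) = C(c-1, 2g-1)`, so `g2(c+1) + g2(c) = Σ_g g² C(c-1, 2g-1)` is a weighted
sum of odd binomial coefficients. Applying Pascal's rule twice gives, for such sums `O_n(f)`,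
the recurrence `O_{n+2}(f) = 2 O_{n+1}(f) + O_n(Δf)`, which lowers the degree of the weight;
for the weights `1`, `g` and `g²` in turn it yields `32 · Σ_g g² C(n, 2g-1) = 2^n (n+1)(n+4)`
for `n ≥ 3`. The claimed closed form satisfies the same first-order recurrence and holds at
`c = 4`.
-/

open Finset

def oddChooseSum (f : ℕ → ℤ) (n : ℕ) : ℤ := ∑ g ∈ range n, f g * n.choose (2 * g + 1)

lemma oddChooseSum_eq_sum_range (f : ℕ → ℤ) {n N : ℕ} (hn : n ≤ N) :
    oddChooseSum f n = ∑ g ∈ range N, f g * n.choose (2 * g + 1) := by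
  refine sum_subset (range_subset_range.mpr hn) fun g _ hg => ?_
  rw [Nat.choose_eq_zero_of_lt (by grind), Nat.cast_zero, mul_zero]

lemma Nat.choose_add_two_add_choose (n k : ℕ) :
    (n + 2).choose (k + 2) + n.choose (k + 2) = 2 * (n + 1).choose (k + 2) + n.choose k := by
  simp only [Nat.choose_succ_succ']
  ring

lemma oddChooseSum_add_two (f : ℕ → ℤ) (n : ℕ) :
    oddChooseSum f (n + 2) =
      2 * oddChooseSum f (n + 1) + oddChooseSum (fun g => f (g + 1) - f g) n := by
  have hn2 := oddChooseSum_eq_sum_range f (le_refl (n + 2))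
  have hn1 := oddChooseSum_eq_sum_range f (Nat.le_succ (n + 1))
  have hn := oddChooseSum_eq_sum_range f (Nat.le_add_right n 2)
  have hΔ : oddChooseSum (fun g => f (g + 1) - f g) n =
      ∑ g ∈ range (n + 1), f (g + 1) * n.choose (2 * g + 1) - oddChooseSum f n := by
    rw [oddChooseSum_eq_sum_range _ (Nat.le_succ n), oddChooseSum_eq_sum_range f (Nat.le_succ n),
      ← sum_sub_distrib]
    exact sum_congr rfl fun g _ => by ring
  have hpascal : ∑ g ∈ range (n + 1), f (g + 1) * (n + 2).choose (2 * (g + 1) + 1) =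
      ∑ g ∈ range (n + 1), (2 * (f (g + 1) * (n + 1).choose (2 * (g + 1) + 1))
        + f (g + 1) * n.choose (2 * g + 1) - f (g + 1) * n.choose (2 * (g + 1) + 1)) := by
    refine sum_congr rfl fun g _ => ?_
    have := congrArg (Nat.cast : ℕ → ℤ) (Nat.choose_add_two_add_choose n (2 * g + 1))
    push_cast at this
    rw [show 2 * (g + 1) + 1 = 2 * g + 1 + 2 by ring]
    linear_combination f (g + 1) * this
  -- Peeling off the `g = 0` terms turns `C(n, 2g - 1)` into `C(n, 2g + 1)` at index `g + 1`,
  -- avoiding truncated subtraction.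
  rw [hn2, hn1, hΔ, hn, sum_range_succ' _ (n + 1), sum_range_succ' _ (n + 1),
    sum_range_succ' _ (n + 1), hpascal, sum_sub_distrib, sum_add_distrib, ← mul_sum]
  simp only [mul_zero, zero_add, Nat.choose_one_right]
  push_cast
  ring

lemma oddChooseSum_one (n : ℕ) : oddChooseSum (fun _ => 1) (n + 1) = 2 ^ n := by
  induction n with
  | zero => simp [oddChooseSum]
  | succ n ih =>
    rw [oddChooseSum_add_two, ih, pow_succ, mul_comm]
    simp [oddChooseSum]

lemma two_mul_oddChooseSum_succ (n : ℕ) :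
    2 * oddChooseSum (fun g => g + 1) (n + 2) = 2 ^ n * (n + 4) := by
  induction n with
  | zero => simp [oddChooseSum, sum_range_succ]
  | succ n ih =>
    rw [oddChooseSum_add_two]
    have h1 := oddChooseSum_one n
    simp only [Nat.cast_add, Nat.cast_one, add_sub_cancel_left] at h1 ⊢
    linear_combination 2 * ih + 2 * h1

lemma four_mul_oddChooseSum_succ_sq (n : ℕ) :
    4 * oddChooseSum (fun g => ((g : ℤ) + 1) ^ 2) (n + 3) = 2 ^ n * (n + 4) * (n + 7) := by
  induction n with
  | zero => norm_num [oddChooseSum, sum_range_succ, Nat.choose]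
  | succ n ih =>
    have hΔ : oddChooseSum (fun g => ((((g + 1 : ℕ) : ℤ) + 1) ^ 2 - ((g : ℤ) + 1) ^ 2)) (n + 2) =
        2 * oddChooseSum (fun g => g + 1) (n + 2) + oddChooseSum (fun _ => 1) (n + 2) := by
      simp only [oddChooseSum, mul_sum, ← sum_add_distrib]
      exact sum_congr rfl fun g _ => by push_cast; ring
    rw [oddChooseSum_add_two, hΔ]
    push_cast
    linear_combination 2 * ih + 4 * two_mul_oddChooseSum_succ n + 4 * oddChooseSum_one (n + 1)

lemma tKnot_add_two_add (m j : ℕ) :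
    tKnot (m + 2) (j + 1) + tKnot (m + 1) (j + 1) = m.choose (2 * j + 1) := by
  rcases Nat.lt_or_ge m (2 * j + 1) with h | h
  · rw [tKnot_eq_zero_of_le (by omega), tKnot_eq_zero_of_le (by omega),
      Nat.choose_eq_zero_of_lt h, Nat.cast_zero, add_zero]
  -- The two alternating sums differ only by the last term `(-1)^k C(2j+1+k, k)`.
  obtain ⟨k, rfl⟩ := Nat.exists_eq_add_of_le h
  simp only [tKnot, if_neg (Nat.succ_ne_zero j)]
  rw [show 2 * j + 1 + k + 2 - 2 * (j + 1) = k + 1 by omega,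
    show 2 * j + 1 + k + 1 - 2 * (j + 1) = k by omega, sum_range_succ,
    show k + 2 * (j + 1) - 1 = 2 * j + 1 + k by omega, Nat.choose_symm_add,
    show 2 * j + 1 + k + 2 - 1 = 2 * (j + 1) + k by omega,
    show 2 * j + 1 + k + 1 - 1 = 2 * j + 1 + k by omega]
  have hsign : (-1 : ℤ) ^ (2 * (j + 1) + k) = (-1) ^ k := by simp [pow_add, pow_mul]
  have hsign' : (-1 : ℤ) ^ (2 * j + 1 + k) = -(-1) ^ k := by simp [pow_add, pow_mul]
  rw [hsign, hsign']
  have hsq : (-1 : ℤ) ^ k * (-1) ^ k = 1 := by rw [← pow_add, ← two_mul, pow_mul]; simp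
  linear_combination ((2 * j + 1 + k).choose k : ℤ) * hsq

lemma g2Total_eq_sum_range {c N : ℕ} (hN : c ≤ 2 * N + 1) :
    g2Total c = ∑ j ∈ range N, ((j : ℤ) + 1) ^ 2 * tKnot c (j + 1) := by
  rw [g2Total, ← Ico_add_one_right_eq_Icc, sum_Ico_eq_sum_range, Nat.add_sub_cancel]
  refine sum_subset (range_subset_range.mpr (by omega)) (fun j _ hj => ?_) |>.trans
    (sum_congr rfl fun j _ => by push_cast; ring_nf)
  rw [tKnot_eq_zero_of_le (by simp at hj; omega), mul_zero]

lemma g2Total_add_two_add (m : ℕ) :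
    g2Total (m + 2) + g2Total (m + 1) = oddChooseSum (fun g => ((g : ℤ) + 1) ^ 2) m := by
  rw [g2Total_eq_sum_range (N := m + 1) (by omega), g2Total_eq_sum_range (N := m + 1) (by omega),
    ← sum_add_distrib, oddChooseSum_eq_sum_range _ (Nat.le_succ m)]
  exact sum_congr rfl fun j _ => by rw [← mul_add, tKnot_add_two_add]

/-- For all integers c ≥ 4, the total square genus satisfies
1728·g²(c) = (9c² + 15c − 16)·2^c − 1280·(−1)^c, i.e.
g²(c) = ((9c²+15c−16)·2^{c−6} − 20·(−1)^c)/27. -/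
theorem g2Total_formula (c : ℕ) (hc : 4 ≤ c) :
    1728 * g2Total c = (9 * (c : ℤ) ^ 2 + 15 * c - 16) * 2 ^ c - 1280 * (-1 : ℤ) ^ c := by
  induction c, hc using Nat.le_induction with
  | base => decide
  | succ c hc ih =>
    obtain ⟨n, rfl⟩ := Nat.exists_eq_add_of_le' hc
    have hstep : g2Total (n + 5) + g2Total (n + 4) = _ := g2Total_add_two_add (n + 3)
    have hodd := four_mul_oddChooseSum_succ_sq n
    show 1728 * g2Total (n + 5) = _
    push_cast at ih ⊢
    linear_combination 1728 * hstep - ih + 432 * hodd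
end

section
/- For all integers n ≥ 4 and all integers k with 2 ≤ k ≤ n, one has t_p(2n+3, k) · binom(n, k) ≤ t_p(2n+3, k+1) · binom(n, k−1). (Equivalently, with c(n) = 2n+3 and g(k) = k+1, the ratio t_p(c(n), g(k)) / binom(n,k) is nondecreasing in k for 1 ≤ k ≤ n.) -/
/-!
Write `T n g = t_p(2n+3, g)` (`tpKnotOdd`). Splitting off the last term of the alternating sum gives
`T (n+1) g = C(n+1, g-1) - T n g`, and by induction `2 T n (g+1) + T n g = C(n+1, g)`;
together they show that `T` obeys Pascal's rule `T (n+1) g = T n g + T n (g-1)` for `g ≥ 2`,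
just as the binomial coefficients do. If `a / b` is nondecreasing on three consecutive indices
(with `b` positive in the middle), it stays so after replacing both sequences by sums of
neighbouring terms; this is the induction step in `n` for `k ≥ 3`. For `k = 2` the two linear
relations give `4 (T n 3 * n - T n 2 * C(n, 2)) = T n 1 * n ^ 2 ≥ 0`. The induction starts
at `n = 0`, where `T 0 g = 0` for `g ≥ 2`.
-/

theorem add_mul_add_le_of_cross_mul_le {R : Type*} [CommRing R] [LinearOrder R]
    [IsStrictOrderedRing R] {a₀ a₁ a₂ b₀ b₁ b₂ : R} (hb₀ : 0 ≤ b₀) (hb₁ : 0 < b₁)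
    (hb₂ : 0 ≤ b₂) (h₀₁ : a₀ * b₁ ≤ a₁ * b₀) (h₁₂ : a₁ * b₂ ≤ a₂ * b₁) :
    (a₀ + a₁) * (b₁ + b₂) ≤ (a₁ + a₂) * (b₀ + b₁) := by
  have h₀₂ : a₀ * b₂ ≤ a₂ * b₀ := by
    refine le_of_mul_le_mul_right ?_ hb₁
    linear_combination b₂ * h₀₁ + b₀ * h₁₂
  linear_combination h₀₁ + h₁₂ + h₀₂

def tpKnotOdd (n g : ℕ) : ℤ := tpKnot (2 * n + 3) g

theorem tpKnotOdd_zero_right (n : ℕ) : tpKnotOdd n 0 = 0 := by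
  simp [tpKnotOdd, tpKnot]

theorem tpKnotOdd_add_one_eq_sum (n g : ℕ) :
    tpKnotOdd n (g + 1) =
      (-1) ^ (n - g) * ∑ m ∈ Finset.range (n + 1 - g), (-1) ^ m * (Nat.choose (m + g) m : ℤ) := by
  rw [tpKnotOdd, tpKnot, if_neg g.succ_ne_zero,
    show (2 * n + 3 + 1) / 2 - (g + 1) - 1 = n - g by omega,
    show (2 * n + 3 + 1) / 2 - (g + 1) = n + 1 - g by omega]
  simp only [Nat.add_succ_sub_one]

theorem tpKnotOdd_eq_zero_of_le {n g : ℕ} (h : n + 2 ≤ g) : tpKnotOdd n g = 0 := by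
  obtain ⟨g, rfl⟩ := Nat.exists_eq_add_of_le' (show 1 ≤ g by omega)
  rw [tpKnotOdd_add_one_eq_sum, show n + 1 - g = 0 by omega]
  simp

theorem tpKnotOdd_succ_succ_eq_choose_sub (n g : ℕ) :
    tpKnotOdd (n + 1) (g + 1) = Nat.choose (n + 1) g - tpKnotOdd n (g + 1) := by
  rcases le_or_gt g n with hgn | hgn
  · obtain ⟨d, rfl⟩ := Nat.exists_eq_add_of_le' hgn
    rw [tpKnotOdd_add_one_eq_sum, tpKnotOdd_add_one_eq_sum,
      show d + g + 1 - g = d + 1 by omega, show d + g + 1 + 1 - g = d + 1 + 1 by omega,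
      show d + g - g = d by omega, Finset.sum_range_succ _ (d + 1),
      show d + 1 + g = d + g + 1 by omega,
      Nat.choose_symm_of_eq_add (by omega : d + g + 1 = d + 1 + g)]
    have hsign : (-1 : ℤ) ^ (d + 1) * (-1) ^ (d + 1) = 1 := pow_mul_pow_eq_one _ (by norm_num)
    linear_combination (Nat.choose (d + g + 1) g : ℤ) * hsign
  · rcases (Nat.succ_le_of_lt hgn).eq_or_lt with rfl | hgn
    · rw [tpKnotOdd_add_one_eq_sum, tpKnotOdd_eq_zero_of_le le_rfl]
      simp
    · rw [tpKnotOdd_eq_zero_of_le (by omega), tpKnotOdd_eq_zero_of_le (by omega),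
        Nat.choose_eq_zero_of_lt hgn]
      simp

theorem tpKnotOdd_one (n : ℕ) : tpKnotOdd n 1 = if Even n then 1 else 0 := by
  induction n with
  | zero => simp [tpKnotOdd_add_one_eq_sum]
  | succ n ih =>
    rw [tpKnotOdd_succ_succ_eq_choose_sub, ih, Nat.choose_zero_right]
    by_cases hn : Even n <;> simp [hn, Nat.even_add_one]

theorem two_mul_tpKnotOdd_add (n g : ℕ) :
    2 * tpKnotOdd n (g + 2) + tpKnotOdd n (g + 1) = Nat.choose (n + 1) (g + 1) := by
  induction n with
  | zero =>
    rw [tpKnotOdd_eq_zero_of_le (by omega)]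
    rcases g with _ | g
    · simp [tpKnotOdd_one]
    · rw [tpKnotOdd_eq_zero_of_le (by omega), Nat.choose_eq_zero_of_lt (by omega)]
      simp
  | succ n ih =>
    have h₂ : tpKnotOdd (n + 1) (g + 2) = Nat.choose (n + 1) (g + 1) - tpKnotOdd n (g + 2) :=
      tpKnotOdd_succ_succ_eq_choose_sub n (g + 1)
    rw [h₂, tpKnotOdd_succ_succ_eq_choose_sub, Nat.choose_succ_succ' (n + 1)]
    push_cast
    linear_combination -ih

theorem tpKnotOdd_succ_add_two (n g : ℕ) :
    tpKnotOdd (n + 1) (g + 2) = tpKnotOdd n (g + 1) + tpKnotOdd n (g + 2) := by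
  rw [tpKnotOdd_succ_succ_eq_choose_sub, ← two_mul_tpKnotOdd_add]
  ring

theorem tpKnotOdd_nonneg (n g : ℕ) : 0 ≤ tpKnotOdd n g := by
  induction n generalizing g with
  | zero =>
    rcases g with _ | _ | g
    · rw [tpKnotOdd_zero_right]
    · simp [tpKnotOdd_one]
    · rw [tpKnotOdd_eq_zero_of_le (by omega)]
  | succ n ih =>
    rcases g with _ | _ | g
    · rw [tpKnotOdd_zero_right]
    · rw [tpKnotOdd_one]; split_ifs <;> norm_num
    · rw [tpKnotOdd_succ_add_two]
      exact add_nonneg (ih _) (ih _)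

theorem tpKnotOdd_two_mul_choose_le (n : ℕ) :
    tpKnotOdd n 2 * Nat.choose n 2 ≤ tpKnotOdd n 3 * Nat.choose n 1 := by
  have h₁ := two_mul_tpKnotOdd_add n 0
  have h₂ := two_mul_tpKnotOdd_add n 1
  have hC : (Nat.choose n 2 : ℤ) * 2 = n * (n - 1) := by
    qify
    rw [Nat.cast_choose_two]
    ring
  have hC₁ : (Nat.choose (n + 1) 2 : ℤ) = Nat.choose n 2 + n := by
    rw [Nat.choose_succ_succ', Nat.choose_one_right]
    push_cast
    ring
  rw [hC₁] at h₂
  rw [Nat.choose_one_right] at h₁ ⊢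
  push_cast at h₁
  have key : 4 * (tpKnotOdd n 3 * n - tpKnotOdd n 2 * Nat.choose n 2) = tpKnotOdd n 1 * n ^ 2 := by
    linear_combination (2 * (n : ℤ)) * h₂ - ((n : ℤ) + 2 * (Nat.choose n 2 : ℤ)) * h₁ +
      (tpKnotOdd n 1 - 1) * hC
  have hT₁ : 0 ≤ tpKnotOdd n 1 * n ^ 2 := mul_nonneg (tpKnotOdd_nonneg n 1) (sq_nonneg _)
  linarith

theorem tpKnotOdd_mul_choose_le (n k : ℕ) :
    tpKnotOdd n (k + 2) * Nat.choose n (k + 2) ≤ tpKnotOdd n (k + 3) * Nat.choose n (k + 1) := by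
  induction n generalizing k with
  | zero =>
    rw [tpKnotOdd_eq_zero_of_le (by omega), zero_mul]
    exact mul_nonneg (tpKnotOdd_nonneg _ _) (Nat.cast_nonneg _)
  | succ n ih =>
    rcases k with _ | k
    · exact tpKnotOdd_two_mul_choose_le (n + 1)
    rcases lt_or_ge n (k + 2) with hkn | hkn
    · rw [Nat.choose_eq_zero_of_lt (by omega), Nat.cast_zero, mul_zero]
      exact mul_nonneg (tpKnotOdd_nonneg _ _) (Nat.cast_nonneg _)
    have hpos : (0 : ℤ) < Nat.choose n (k + 2) := by exact_mod_cast Nat.choose_pos hkn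
    rw [tpKnotOdd_succ_add_two, tpKnotOdd_succ_add_two, Nat.choose_succ_succ',
      Nat.choose_succ_succ', Nat.cast_add, Nat.cast_add]
    exact add_mul_add_le_of_cross_mul_le (Nat.cast_nonneg _) hpos (Nat.cast_nonneg _)
      (ih k) (ih (k + 1))

theorem tpKnot_ratio_mono_general (n k : ℕ) (hk : 2 ≤ k) :
    tpKnot (2 * n + 3) k * (Nat.choose n k : ℤ) ≤
      tpKnot (2 * n + 3) (k + 1) * (Nat.choose n (k - 1) : ℤ) := by
  obtain ⟨k, rfl⟩ := Nat.exists_eq_add_of_le' hk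
  exact tpKnotOdd_mul_choose_le n k

/-- For all integers n ≥ 4 and all k with 2 ≤ k ≤ n,
t_p(2n+3, k) · binom(n, k) ≤ t_p(2n+3, k+1) · binom(n, k−1); equivalently, with
c(n) = 2n+3 and g(k) = k+1, the ratio t_p(c(n), g(k)) / binom(n,k) is nondecreasing
in k for 1 ≤ k ≤ n. -/
theorem tpKnot_ratio_mono (n k : ℕ) (hn : 4 ≤ n) (hk : 2 ≤ k) (hkn : k ≤ n) :
    tpKnot (2 * n + 3) k * (Nat.choose n k : ℤ) ≤
      tpKnot (2 * n + 3) (k + 1) * (Nat.choose n (k - 1) : ℤ) :=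
  tpKnot_ratio_mono_general n k hk
end
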